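/- arXiv:2505.03155 — 5 statements merged into one kernel-verified Lean document; each statement's English description precedes it below -/
import Mathlib

section
/- Let X ∈ ℝ^{K×d} be a feature matrix and r ∈ ℝ^K a reward vector with |r(a)| ≤ R_max for all a. For the log-linear policy π_θ = softmax(Xθ), the map θ ↦ ⟨π_θ, r⟩ is smooth with constant (9/2) R_max λ_max(X^⊤X): for all θ, θ′ ∈ ℝ^d, |⟨π_{θ′} − π_θ, r⟩ − ⟨X^⊤(diag(π_θ) − π_θ π_θ^⊤) r, θ′ − θ⟩| ≤ (9/4) R_max λ_max(X^⊤X) ‖θ′ − θ‖₂². -/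
open scoped BigOperators

/-- Log-linear (softmax) policy `π_θ = softmax(Xθ)`. -/
noncomputable def policy {K d : ℕ} (X : Matrix (Fin K) (Fin d) ℝ) (θ : Fin d → ℝ) (a : Fin K) : ℝ :=
  Real.exp (∑ j, X a j * θ j) / ∑ b, Real.exp (∑ j, X b j * θ j)

/-- Expected reward `⟨π_θ, r⟩`. -/
noncomputable def expRwd {K d : ℕ} (X : Matrix (Fin K) (Fin d) ℝ) (r : Fin K → ℝ)
    (θ : Fin d → ℝ) : ℝ :=
  ∑ a, policy X θ a * r a

/-- Policy gradient `X^⊤ (diag(π_θ) − π_θ π_θ^⊤) r`. -/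
noncomputable def pgrad {K d : ℕ} (X : Matrix (Fin K) (Fin d) ℝ) (r : Fin K → ℝ)
    (θ : Fin d → ℝ) : Fin d → ℝ :=
  fun j => ∑ a, X a j * (policy X θ a * (r a - expRwd X r θ))

/-- Largest eigenvalue of `XᵀX`. -/
noncomputable def lamMax {K d : ℕ} (X : Matrix (Fin K) (Fin d) ℝ) : ℝ :=
  ⨆ i, (Matrix.isHermitian_conjTranspose_mul_self X).eigenvalues i

open Matrix
lemma lamMax_nonneg {K d : ℕ} (X : Matrix (Fin K) (Fin d) ℝ) : 0 ≤ lamMax X :=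
  Real.iSup_nonneg (Matrix.eigenvalues_conjTranspose_mul_self_nonneg X)

lemma rayleigh {K d : ℕ} (X : Matrix (Fin K) (Fin d) ℝ) (δ : Fin d → ℝ) :
    ∑ a, (∑ j, X a j * δ j) ^ 2 ≤ lamMax X * ∑ j, δ j ^ 2 := by
  classical
  have hA := Matrix.isHermitian_conjTranspose_mul_self X
  set U : Matrix (Fin d) (Fin d) ℝ := (hA.eigenvectorUnitary : Matrix (Fin d) (Fin d) ℝ) with hU
  set c : Fin d → ℝ := Matrix.vecMul δ U with hc
  have hUU : U * star U = 1 := Matrix.mem_unitaryGroup_iff.mp hA.eigenvectorUnitary.2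
  have hstar : (star U) *ᵥ δ = c := by
    funext i
    simp [Matrix.mulVec, Matrix.vecMul, dotProduct, hc, Matrix.star_apply, mul_comm]
  -- LHS = δ ⬝ᵥ ((Xᴴ * X) *ᵥ δ)
  have hL : ∑ a, (∑ j, X a j * δ j) ^ 2 = dotProduct δ ((Xᴴ * X) *ᵥ δ) := by
    rw [← Matrix.mulVec_mulVec, Matrix.dotProduct_mulVec]
    have hv : Matrix.vecMul δ Xᴴ = fun a => ∑ j, X a j * δ j := by
      funext a
      simp [Matrix.vecMul, dotProduct, Matrix.conjTranspose_apply, mul_comm]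
    rw [hv]
    simp [dotProduct, Matrix.mulVec, sq, mul_comm]
  have hQ1 : dotProduct δ ((Xᴴ * X) *ᵥ δ) =
      dotProduct δ ((U * Matrix.diagonal (RCLike.ofReal ∘ hA.eigenvalues) * star U) *ᵥ δ) :=
    congrArg (fun M => dotProduct δ (M *ᵥ δ)) hA.spectral_theorem
  have hQ2 : dotProduct δ ((U * Matrix.diagonal (RCLike.ofReal ∘ hA.eigenvalues) * star U) *ᵥ δ) =
      ∑ i, hA.eigenvalues i * c i ^ 2 := by
    rw [Matrix.dotProduct_mulVec, ← Matrix.vecMul_vecMul, ← Matrix.vecMul_vecMul]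
    rw [← Matrix.dotProduct_mulVec, hstar]
    have hDiag : Matrix.vecMul c (Matrix.diagonal (RCLike.ofReal ∘ hA.eigenvalues)) =
        fun i => c i * hA.eigenvalues i := by
      funext i
      rw [Matrix.vecMul_diagonal]
      simp
    rw [← hc, hDiag]
    simp only [dotProduct]
    apply Finset.sum_congr rfl
    intro i _
    ring
  have hNorm : ∑ j, δ j ^ 2 = ∑ i, c i ^ 2 := by
    have h1 : ∑ i, c i ^ 2 = dotProduct (Matrix.vecMul δ U) ((star U) *ᵥ δ) := by
      rw [hstar, ← hc]
      simp [dotProduct, sq]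
    rw [h1, ← Matrix.dotProduct_mulVec, Matrix.mulVec_mulVec, hUU]
    simp [dotProduct, sq]
  rw [hL, hQ1, hQ2, hNorm, Finset.mul_sum]
  apply Finset.sum_le_sum
  intro i _
  have h1 : hA.eigenvalues i ≤ lamMax X := by
    apply le_ciSup (Set.Finite.bddAbove (Set.finite_range _))
  exact mul_le_mul_of_nonneg_right h1 (sq_nonneg _)


namespace SmoothAux

variable {K d : ℕ}

/-- the line `t ↦ θ + t δ` -/
def lin (θ δ : Fin d → ℝ) (t : ℝ) : Fin d → ℝ := fun j => θ j + t * δ j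

/-- `z = X δ` -/
def z (X : Matrix (Fin K) (Fin d) ℝ) (δ : Fin d → ℝ) : Fin K → ℝ := fun a => ∑ j, X a j * δ j

noncomputable def F (X : Matrix (Fin K) (Fin d) ℝ) (r : Fin K → ℝ) (θ δ : Fin d → ℝ) (t : ℝ) : ℝ :=
  expRwd X r (lin θ δ t)

noncomputable def W (X : Matrix (Fin K) (Fin d) ℝ) (θ δ : Fin d → ℝ) (t : ℝ) : ℝ :=
  ∑ a, policy X (lin θ δ t) a * z X δ a

noncomputable def G (X : Matrix (Fin K) (Fin d) ℝ) (r : Fin K → ℝ) (θ δ : Fin d → ℝ) (t : ℝ) : ℝ :=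
  ∑ a, policy X (lin θ δ t) a * (z X δ a - W X θ δ t) * r a

noncomputable def V (X : Matrix (Fin K) (Fin d) ℝ) (θ δ : Fin d → ℝ) (t : ℝ) : ℝ :=
  ∑ a, policy X (lin θ δ t) a * (z X δ a - W X θ δ t) ^ 2

variable (X : Matrix (Fin K) (Fin d) ℝ) (r : Fin K → ℝ) (θ δ : Fin d → ℝ)

lemma sum_lin (a : Fin K) (t : ℝ) :
    ∑ j, X a j * lin θ δ t j = (∑ j, X a j * θ j) + t * z X δ a := by
  simp only [lin, z, mul_add, Finset.sum_add_distrib, Finset.mul_sum]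
  congr 1
  apply Finset.sum_congr rfl
  intro j _
  ring

section pos
variable [Nonempty (Fin K)]

lemma den_pos (θ₀ : Fin d → ℝ) : 0 < ∑ b, Real.exp (∑ j, X b j * θ₀ j) :=
  Finset.sum_pos (fun b _ => Real.exp_pos _) Finset.univ_nonempty

lemma policy_pos (θ₀ : Fin d → ℝ) (a : Fin K) : 0 < policy X θ₀ a :=
  div_pos (Real.exp_pos _) (den_pos X θ₀)

lemma sum_policy (θ₀ : Fin d → ℝ) : ∑ a, policy X θ₀ a = 1 := by
  simp only [policy]
  rw [← Finset.sum_div]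
  exact div_self (ne_of_gt (den_pos X θ₀))

lemma policy_le_one (θ₀ : Fin d → ℝ) (a : Fin K) : policy X θ₀ a ≤ 1 := by
  have h := sum_policy X θ₀
  calc policy X θ₀ a ≤ ∑ b, policy X θ₀ b :=
        Finset.single_le_sum (fun b _ => (policy_pos X θ₀ b).le) (Finset.mem_univ a)
    _ = 1 := h

lemma hasDerivAt_policy (a : Fin K) (t : ℝ) :
    HasDerivAt (fun s => policy X (lin θ δ s) a)
      (policy X (lin θ δ t) a * (z X δ a - W X θ δ t)) t := by
  have hnum : ∀ b : Fin K, HasDerivAt (fun s => Real.exp (∑ j, X b j * lin θ δ s j))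
      (z X δ b * Real.exp (∑ j, X b j * lin θ δ t j)) t := by
    intro b
    have h1 : HasDerivAt (fun s : ℝ => (∑ j, X b j * θ j) + s * z X δ b) (z X δ b) t :=
      (hasDerivAt_mul_const (z X δ b)).const_add _
    have h2 := h1.exp
    have heq : (fun s => Real.exp (∑ j, X b j * lin θ δ s j)) =
        fun s : ℝ => Real.exp ((∑ j, X b j * θ j) + s * z X δ b) := by
      funext s; rw [sum_lin]
    rw [heq, sum_lin]
    simpa [mul_comm] using h2
  have hden : HasDerivAt (fun s => ∑ b, Real.exp (∑ j, X b j * lin θ δ s j))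
      (∑ b, z X δ b * Real.exp (∑ j, X b j * lin θ δ t j)) t :=
    HasDerivAt.fun_sum (fun b _ => hnum b)
  have hS : (∑ b, Real.exp (∑ j, X b j * lin θ δ t j)) ≠ 0 :=
    ne_of_gt (den_pos X (lin θ δ t))
  have hdiv := (hnum a).fun_div hden hS
  have heq2 : (fun s => policy X (lin θ δ s) a) =
      fun s => Real.exp (∑ j, X a j * lin θ δ s j) / ∑ b, Real.exp (∑ j, X b j * lin θ δ s j) := by
    funext s; rfl
  rw [heq2]
  refine hdiv.congr_deriv (Eq.symm ?_)
  -- value equality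
  set S := ∑ b, Real.exp (∑ j, X b j * lin θ δ t j) with hSdef
  set E : Fin K → ℝ := fun b => Real.exp (∑ j, X b j * lin θ δ t j) with hEdef
  have hpol : ∀ b, policy X (lin θ δ t) b = E b / S := fun b => rfl
  have hW : W X θ δ t * S = ∑ b, z X δ b * E b := by
    rw [W, Finset.sum_mul]
    apply Finset.sum_congr rfl
    intro b _
    rw [hpol]
    field_simp
  rw [hpol, ← hW]
  field_simp
  ring
end pos

section pos2
variable [Nonempty (Fin K)]

lemma hasDerivAt_F (t : ℝ) : HasDerivAt (F X r θ δ) (G X r θ δ t) t := by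
  have h : HasDerivAt (fun s => ∑ a, policy X (lin θ δ s) a * r a)
      (∑ a, policy X (lin θ δ t) a * (z X δ a - W X θ δ t) * r a) t :=
    HasDerivAt.fun_sum (fun a _ => (hasDerivAt_policy X θ δ a t).mul_const (r a))
  exact h

lemma hasDerivAt_W (t : ℝ) :
    HasDerivAt (W X θ δ) (∑ a, policy X (lin θ δ t) a * (z X δ a - W X θ δ t) * z X δ a) t :=
  HasDerivAt.fun_sum (fun a _ => (hasDerivAt_policy X θ δ a t).mul_const (z X δ a))

lemma Vp_eq_V (t : ℝ) :
    ∑ a, policy X (lin θ δ t) a * (z X δ a - W X θ δ t) * z X δ a = V X θ δ t := by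
  set p : Fin K → ℝ := policy X (lin θ δ t) with hp
  set w : ℝ := W X θ δ t with hw
  have hsplit : ∑ a, p a * (z X δ a - w) * z X δ a =
      (∑ a, p a * (z X δ a - w) ^ 2) + (∑ a, p a * (z X δ a - w)) * w := by
    rw [Finset.sum_mul, ← Finset.sum_add_distrib]
    apply Finset.sum_congr rfl
    intro a _
    ring
  have hzero : ∑ a, p a * (z X δ a - w) = 0 := by
    have : ∑ a, p a * (z X δ a - w) = (∑ a, p a * z X δ a) - (∑ a, p a) * w := by
      rw [Finset.sum_mul, ← Finset.sum_sub_distrib]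
      apply Finset.sum_congr rfl
      intro a _
      ring
    rw [this, sum_policy X (lin θ δ t)]
    rw [hw, W]
    ring
  rw [hsplit, hzero, V]
  simp [hp, hw]

lemma hasDerivAt_G (t : ℝ) :
    HasDerivAt (G X r θ δ)
      ((∑ a, policy X (lin θ δ t) a * (z X δ a - W X θ δ t) ^ 2 * r a)
        - V X θ δ t * F X r θ δ t) t := by
  have hW' := (hasDerivAt_W X θ δ t)
  rw [Vp_eq_V X θ δ t] at hW'
  have hterm : ∀ a : Fin K, HasDerivAt (fun s => policy X (lin θ δ s) a * (z X δ a - W X θ δ s) * r a)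
      ((policy X (lin θ δ t) a * (z X δ a - W X θ δ t) * (z X δ a - W X θ δ t)
        + policy X (lin θ δ t) a * (-(V X θ δ t))) * r a) t := by
    intro a
    have h1 : HasDerivAt (fun s => z X δ a - W X θ δ s) (-(V X θ δ t)) t := hW'.const_sub _
    exact ((hasDerivAt_policy X θ δ a t).mul h1).mul_const (r a)
  have h := HasDerivAt.fun_sum (fun a (_ : a ∈ Finset.univ) => hterm a)
  have heq : G X r θ δ = fun s => ∑ a, policy X (lin θ δ s) a * (z X δ a - W X θ δ s) * r a := rfl
  rw [heq]
  refine h.congr_deriv (Eq.symm ?_)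
  rw [F, expRwd, sub_eq_add_neg]
  simp only [add_mul, Finset.sum_add_distrib]
  congr 1
  · exact Finset.sum_congr rfl (fun a _ => by ring)
  · rw [Finset.mul_sum, ← Finset.sum_neg_distrib]
    exact Finset.sum_congr rfl (fun a _ => by ring)

end pos2

section bounds
variable [Nonempty (Fin K)] {Rmax : ℝ}

lemma abs_F_le (hr : ∀ a, |r a| ≤ Rmax) (t : ℝ) : |F X r θ δ t| ≤ Rmax := by
  rw [F, expRwd]
  calc |∑ a, policy X (lin θ δ t) a * r a| ≤ ∑ a, |policy X (lin θ δ t) a * r a| :=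
        Finset.abs_sum_le_sum_abs _ _
    _ ≤ ∑ a, policy X (lin θ δ t) a * Rmax := by
        apply Finset.sum_le_sum
        intro a _
        rw [abs_mul, abs_of_pos (policy_pos X _ a)]
        exact mul_le_mul_of_nonneg_left (hr a) (policy_pos X _ a).le
    _ = Rmax := by rw [← Finset.sum_mul, sum_policy X]; ring

lemma V_nonneg (t : ℝ) : 0 ≤ V X θ δ t :=
  Finset.sum_nonneg fun a _ => mul_nonneg (policy_pos X _ a).le (sq_nonneg _)

lemma V_le (t : ℝ) : V X θ δ t ≤ ∑ a, z X δ a ^ 2 := by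
  set p : Fin K → ℝ := policy X (lin θ δ t) with hp
  set w : ℝ := W X θ δ t with hw
  have hsum1 : ∑ a, p a = 1 := sum_policy X _
  have hsumw : ∑ a, p a * z X δ a = w := rfl
  have hVeq : V X θ δ t = (∑ a, p a * z X δ a ^ 2) - 2 * w * (∑ a, p a * z X δ a)
      + w ^ 2 * (∑ a, p a) := by
    rw [V]
    rw [Finset.mul_sum, Finset.mul_sum, ← Finset.sum_sub_distrib, ← Finset.sum_add_distrib]
    apply Finset.sum_congr rfl
    intro a _
    ring
  have hVeq2 : V X θ δ t = (∑ a, p a * z X δ a ^ 2) - w ^ 2 := by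
    rw [hVeq, hsum1, hsumw]; ring
  have h2 : ∑ a, p a * z X δ a ^ 2 ≤ ∑ a, z X δ a ^ 2 := by
    apply Finset.sum_le_sum
    intro a _
    exact mul_le_of_le_one_left (sq_nonneg _) (policy_le_one X _ a)
  calc V X θ δ t = (∑ a, p a * z X δ a ^ 2) - w ^ 2 := hVeq2
    _ ≤ ∑ a, p a * z X δ a ^ 2 := by nlinarith [sq_nonneg w]
    _ ≤ ∑ a, z X δ a ^ 2 := h2

lemma abs_G'_le (hRmax : 0 < Rmax) (hr : ∀ a, |r a| ≤ Rmax) (t : ℝ) :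
    |(∑ a, policy X (lin θ δ t) a * (z X δ a - W X θ δ t) ^ 2 * r a)
      - V X θ δ t * F X r θ δ t| ≤ 2 * Rmax * ∑ a, z X δ a ^ 2 := by
  have hA : |∑ a, policy X (lin θ δ t) a * (z X δ a - W X θ δ t) ^ 2 * r a|
      ≤ Rmax * V X θ δ t := by
    calc |∑ a, policy X (lin θ δ t) a * (z X δ a - W X θ δ t) ^ 2 * r a|
        ≤ ∑ a, |policy X (lin θ δ t) a * (z X δ a - W X θ δ t) ^ 2 * r a| :=
          Finset.abs_sum_le_sum_abs _ _
      _ ≤ ∑ a, policy X (lin θ δ t) a * (z X δ a - W X θ δ t) ^ 2 * Rmax := by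
          apply Finset.sum_le_sum
          intro a _
          rw [abs_mul, abs_of_nonneg (mul_nonneg (policy_pos X _ a).le (sq_nonneg _))]
          exact mul_le_mul_of_nonneg_left (hr a)
            (mul_nonneg (policy_pos X _ a).le (sq_nonneg _))
      _ = Rmax * V X θ δ t := by rw [V, ← Finset.sum_mul]; ring
  have hB : |V X θ δ t * F X r θ δ t| ≤ V X θ δ t * Rmax := by
    rw [abs_mul, abs_of_nonneg (V_nonneg X θ δ t)]
    exact mul_le_mul_of_nonneg_left (abs_F_le X r θ δ hr t) (V_nonneg X θ δ t)
  have hV := V_le X θ δ t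
  calc |(∑ a, policy X (lin θ δ t) a * (z X δ a - W X θ δ t) ^ 2 * r a)
      - V X θ δ t * F X r θ δ t|
      ≤ |∑ a, policy X (lin θ δ t) a * (z X δ a - W X θ δ t) ^ 2 * r a|
        + |V X θ δ t * F X r θ δ t| := abs_sub _ _
    _ ≤ Rmax * V X θ δ t + V X θ δ t * Rmax := add_le_add hA hB
    _ = 2 * Rmax * V X θ δ t := by ring
    _ ≤ 2 * Rmax * ∑ a, z X δ a ^ 2 := by
        apply mul_le_mul_of_nonneg_left hV
        positivity

lemma key (hRmax : 0 < Rmax) (hr : ∀ a, |r a| ≤ Rmax) :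
    |F X r θ δ 1 - F X r θ δ 0 - G X r θ δ 0| ≤ 2 * Rmax * ∑ a, z X δ a ^ 2 := by
  set C : ℝ := 2 * Rmax * ∑ a, z X δ a ^ 2 with hC
  -- G is C-Lipschitz (via its derivative bound)
  have hGlip : ∀ t : ℝ, |G X r θ δ t - G X r θ δ 0| ≤ C * |t| := by
    intro t
    have := Convex.norm_image_sub_le_of_norm_hasDerivWithin_le
      (f := G X r θ δ)
      (f' := fun t => (∑ a, policy X (lin θ δ t) a * (z X δ a - W X θ δ t) ^ 2 * r a)
        - V X θ δ t * F X r θ δ t)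
      (s := Set.univ) (C := C)
      (fun x _ => (hasDerivAt_G X r θ δ x).hasDerivWithinAt)
      (fun x _ => by simpa [Real.norm_eq_abs] using abs_G'_le X r θ δ hRmax hr x)
      convex_univ (Set.mem_univ 0) (Set.mem_univ t)
    simpa [Real.norm_eq_abs] using this
  -- apply MVT to H t = F t - t * G 0 on [0,1]
  have hH : ∀ t ∈ Set.Icc (0:ℝ) 1,
      HasDerivWithinAt (fun s => F X r θ δ s - s * G X r θ δ 0)
        (G X r θ δ t - G X r θ δ 0) (Set.Icc (0:ℝ) 1) t := by
    intro t _
    exact ((hasDerivAt_F X r θ δ t).sub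
      ((hasDerivAt_mul_const (G X r θ δ 0)))).hasDerivWithinAt
  have hbound : ∀ t ∈ Set.Icc (0:ℝ) 1, ‖G X r θ δ t - G X r θ δ 0‖ ≤ C := by
    intro t ht
    rw [Real.norm_eq_abs]
    calc |G X r θ δ t - G X r θ δ 0| ≤ C * |t| := hGlip t
      _ ≤ C * 1 := by
          apply mul_le_mul_of_nonneg_left _ (by positivity)
          rw [abs_of_nonneg ht.1]
          exact ht.2
      _ = C := mul_one C
  have := Convex.norm_image_sub_le_of_norm_hasDerivWithin_le hH hbound
    (convex_Icc 0 1) (Set.left_mem_Icc.mpr zero_le_one) (Set.right_mem_Icc.mpr zero_le_one)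
  rw [Real.norm_eq_abs, Real.norm_eq_abs] at this
  have h1 : (1:ℝ) - 0 = 1 := by norm_num
  rw [h1, abs_one, mul_one] at this
  calc |F X r θ δ 1 - F X r θ δ 0 - G X r θ δ 0|
      = |(F X r θ δ 1 - 1 * G X r θ δ 0) - (F X r θ δ 0 - 0 * G X r θ δ 0)| := by ring_nf
    _ ≤ C := this

end bounds

end SmoothAux

/-- Smoothness of the expected reward for log-linear policies: for all `θ, θ′`,
`|⟨π_{θ′} − π_θ, r⟩ − ⟨X^⊤(diag(π_θ) − π_θ π_θ^⊤) r, θ′ − θ⟩| ≤ (9/4) R_max λ_max(XᵀX) ‖θ′ − θ‖₂²`. -/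
theorem smoothness_expected_reward_log_linear {K d : ℕ}
    (X : Matrix (Fin K) (Fin d) ℝ) (r : Fin K → ℝ)
    (Rmax : ℝ) (hRmax : 0 < Rmax) (hr : ∀ a, |r a| ≤ Rmax) :
    ∀ θ θ' : Fin d → ℝ,
      |expRwd X r θ' - expRwd X r θ - ∑ j, pgrad X r θ j * (θ' j - θ j)|
        ≤ (9/4) * Rmax * lamMax X * ∑ j, (θ' j - θ j) ^ 2 := by
  intro θ θ'
  have hlam := lamMax_nonneg X
  have hs : 0 ≤ ∑ j, (θ' j - θ j) ^ 2 := Finset.sum_nonneg fun j _ => sq_nonneg _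
  rcases Nat.eq_zero_or_pos K with hK | hK
  · subst hK
    have h0 : expRwd X r θ' = 0 := by simp [expRwd]
    have h0' : expRwd X r θ = 0 := by simp [expRwd]
    have hg : ∀ j, pgrad X r θ j = 0 := fun j => by simp [pgrad]
    simp only [h0, h0', hg, zero_mul, Finset.sum_const_zero, sub_zero, sub_self, abs_zero]
    exact mul_nonneg (mul_nonneg (mul_nonneg (by norm_num) hRmax.le) hlam) hs
  · haveI : Nonempty (Fin K) := ⟨⟨0, hK⟩⟩
    have hlin0 : SmoothAux.lin θ (fun j => θ' j - θ j) 0 = θ := by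
      funext j; simp [SmoothAux.lin]
    have hlin1 : SmoothAux.lin θ (fun j => θ' j - θ j) 1 = θ' := by
      funext j; simp [SmoothAux.lin]
    have hF1 : SmoothAux.F X r θ (fun j => θ' j - θ j) 1 = expRwd X r θ' := by
      rw [SmoothAux.F, hlin1]
    have hF0 : SmoothAux.F X r θ (fun j => θ' j - θ j) 0 = expRwd X r θ := by
      rw [SmoothAux.F, hlin0]
    have hW0 : SmoothAux.W X θ (fun j => θ' j - θ j) 0
        = ∑ a, policy X θ a * SmoothAux.z X (fun j => θ' j - θ j) a := by
      rw [SmoothAux.W, hlin0]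
    have hswap : ∑ j, pgrad X r θ j * (θ' j - θ j)
        = ∑ a, (policy X θ a * (r a - expRwd X r θ)) * SmoothAux.z X (fun j => θ' j - θ j) a := by
      simp only [pgrad, Finset.sum_mul]
      rw [Finset.sum_comm]
      apply Finset.sum_congr rfl
      intro a _
      rw [SmoothAux.z, Finset.mul_sum]
      apply Finset.sum_congr rfl
      intro j _
      ring
    have e1 : ∑ a, policy X θ a * (SmoothAux.z X (fun j => θ' j - θ j) a
          - ∑ b, policy X θ b * SmoothAux.z X (fun j => θ' j - θ j) b) * r a
        = (∑ a, policy X θ a * SmoothAux.z X (fun j => θ' j - θ j) a * r a)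
          - (∑ b, policy X θ b * SmoothAux.z X (fun j => θ' j - θ j) b)
            * (∑ a, policy X θ a * r a) := by
      rw [Finset.mul_sum, ← Finset.sum_sub_distrib]
      apply Finset.sum_congr rfl
      intro a _
      ring
    have e2 : ∑ a, (policy X θ a * (r a - expRwd X r θ)) * SmoothAux.z X (fun j => θ' j - θ j) a
        = (∑ a, policy X θ a * SmoothAux.z X (fun j => θ' j - θ j) a * r a)
          - expRwd X r θ * (∑ b, policy X θ b * SmoothAux.z X (fun j => θ' j - θ j) b) := by
      rw [Finset.mul_sum, ← Finset.sum_sub_distrib]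
      apply Finset.sum_congr rfl
      intro a _
      ring
    have hG0 : SmoothAux.G X r θ (fun j => θ' j - θ j) 0
        = ∑ j, pgrad X r θ j * (θ' j - θ j) := by
      rw [SmoothAux.G, hlin0, hW0, e1, hswap, e2, expRwd]
      ring
    have hkey := SmoothAux.key X r θ (fun j => θ' j - θ j) hRmax hr
    rw [hF1, hF0, hG0] at hkey
    have hray := rayleigh X (fun j => θ' j - θ j)
    have hz : ∑ a, SmoothAux.z X (fun j => θ' j - θ j) a ^ 2
        = ∑ a, (∑ j, X a j * (θ' j - θ j)) ^ 2 := rfl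
    calc |expRwd X r θ' - expRwd X r θ - ∑ j, pgrad X r θ j * (θ' j - θ j)|
        ≤ 2 * Rmax * ∑ a, SmoothAux.z X (fun j => θ' j - θ j) a ^ 2 := hkey
      _ ≤ 2 * Rmax * (lamMax X * ∑ j, (θ' j - θ j) ^ 2) := by
          rw [hz]
          exact mul_le_mul_of_nonneg_left hray (by positivity)
      _ ≤ (9/4) * Rmax * lamMax X * ∑ j, (θ' j - θ j) ^ 2 := by
          nlinarith [mul_nonneg (mul_nonneg hRmax.le hlam) hs]
end

section
/- Suppose the rewards r(1) > r(2) > ⋯ > r(K) are distinct with |r(a)| ≤ R_max, K ≥ 2, and there exists w ∈ ℝ^d such that Xw preserves the ordering of r. Let (θ_t)_{t≥1} be generated by exact Lin-SPG with any initialization θ_1 ∈ ℝ^d and constant learning rate η with 0 < η < 4/(9 R_max λ_max(X^⊤X)). Then (i) for all finite t ≥ 1, ⟨π_{θ_{t+1}}, r⟩ > ⟨π_{θ_t}, r⟩, and (ii) there exists an action a ∈ [K] such that lim_{t→∞} π_{θ_t}(a) = 1. -/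
open scoped BigOperators

set_option maxHeartbeats 1000000

open scoped BigOperators RealInnerProductSpace
open Matrix


theorem quadform_le {K d : ℕ} (X : Matrix (Fin K) (Fin d) ℝ) (u : Fin d → ℝ) :
    ∑ a, (∑ j, X a j * u j)^2 ≤ lamMax X * ∑ j, (u j)^2 := by
  classical
  have hA := Matrix.isHermitian_conjTranspose_mul_self X
  set A : Matrix (Fin d) (Fin d) ℝ := Xᴴ * X with hAdef
  have hAt : Aᵀ = A := by
    rw [← Matrix.conjTranspose_eq_transpose_of_trivial]; exact hA.eq
  have hAX : A = Xᵀ * X := by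
    rw [hAdef, Matrix.conjTranspose_eq_transpose_of_trivial]
  set b := hA.eigenvectorBasis with hb
  set lam := hA.eigenvalues with hlam
  set v : EuclideanSpace ℝ (Fin d) := (WithLp.equiv 2 _).symm u with hv
  set Av : EuclideanSpace ℝ (Fin d) := (WithLp.equiv 2 _).symm (A.mulVec u) with hAv
  have hdot : ∀ (x y : EuclideanSpace ℝ (Fin d)), ⟪x, y⟫ = ∑ i, x i * y i := by
    intro x y
    simp [PiLp.inner_apply, mul_comm]
  have hsym : ∀ i, ⟪b i, Av⟫ = lam i * ⟪b i, v⟫ := by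
    intro i
    have hmv := hA.mulVec_eigenvectorBasis i
    rw [hdot, hdot]
    calc ∑ j, b i j * Av j = (⇑(b i)) ⬝ᵥ (A.mulVec u) := rfl
      _ = (A.mulVec (⇑(b i))) ⬝ᵥ u := by
          rw [Matrix.dotProduct_mulVec, ← Matrix.mulVec_transpose, hAt]
      _ = (lam i • ⇑(b i)) ⬝ᵥ u := by rw [← hmv]
      _ = lam i * ∑ j, b i j * v j := by
          simp only [smul_dotProduct, dotProduct, Pi.smul_apply, smul_eq_mul]
          rw [Finset.mul_sum]
          refine Finset.sum_congr rfl fun j _ => ?_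
          show lam i * b i j * u j = lam i * (b i j * u j)
          ring
  have hquad : ∑ a, (∑ j, X a j * u j)^2 = ⟪v, Av⟫ := by
    rw [hdot]
    have h1 : ∑ i, v i * Av i = u ⬝ᵥ (A.mulVec u) := rfl
    rw [h1, hAX, ← Matrix.mulVec_mulVec, Matrix.dotProduct_mulVec,
      Matrix.vecMul_transpose]
    simp [dotProduct, Matrix.mulVec, sq]
  have hexp : ⟪v, Av⟫ = ∑ i, lam i * (⟪b i, v⟫)^2 := by
    rw [← OrthonormalBasis.sum_inner_mul_inner b v Av]
    congr 1; ext i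
    rw [real_inner_comm v (b i), hsym, real_inner_comm (b i) v]; ring
  have hlamle : ∀ i, lam i ≤ lamMax X := by
    intro i
    exact le_ciSup (Set.Finite.bddAbove (Set.finite_range _)) i
  have hnorm : ∑ i, (⟪b i, v⟫)^2 = ∑ j, (u j)^2 := by
    have h2 := OrthonormalBasis.sum_inner_mul_inner b v v
    calc ∑ i, (⟪b i, v⟫)^2 = ∑ i, ⟪v, b i⟫ * ⟪b i, v⟫ := by
          congr 1; ext i; rw [real_inner_comm v (b i)]; ring
      _ = ⟪v, v⟫ := h2
      _ = ∑ j, (u j)^2 := by rw [hdot]; congr 1; ext j; rw [sq]; rfl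
  calc ∑ a, (∑ j, X a j * u j)^2 = ∑ i, lam i * (⟪b i, v⟫)^2 := by rw [hquad, hexp]
    _ ≤ ∑ i, lamMax X * (⟪b i, v⟫)^2 := by
        apply Finset.sum_le_sum; intro i _
        exact mul_le_mul_of_nonneg_right (hlamle i) (sq_nonneg _)
    _ = lamMax X * ∑ j, (u j)^2 := by rw [← Finset.mul_sum, hnorm]


noncomputable def smax {K : ℕ} (z : Fin K → ℝ) (a : Fin K) : ℝ :=
  Real.exp (z a) / ∑ b, Real.exp (z b)

variable {K : ℕ}

lemma smax_denom_pos (hK : 0 < K) (z : Fin K → ℝ) : 0 < ∑ b, Real.exp (z b) := by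
  apply Finset.sum_pos (fun b _ => Real.exp_pos _)
  exact ⟨⟨0, hK⟩, Finset.mem_univ _⟩

lemma smax_pos (hK : 0 < K) (z : Fin K → ℝ) (a : Fin K) : 0 < smax z a :=
  div_pos (Real.exp_pos _) (smax_denom_pos hK z)

lemma smax_sum (hK : 0 < K) (z : Fin K → ℝ) : ∑ a, smax z a = 1 := by
  unfold smax
  rw [← Finset.sum_div]
  exact div_self (ne_of_gt (smax_denom_pos hK z))

lemma smax_le_one (hK : 0 < K) (z : Fin K → ℝ) (a : Fin K) : smax z a ≤ 1 := by
  have h := smax_sum hK z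
  have : smax z a ≤ ∑ b, smax z b :=
    Finset.single_le_sum (fun b _ => le_of_lt (smax_pos hK z b)) (Finset.mem_univ a)
  linarith

lemma hasDerivAt_smax (hK : 0 < K) (z c : Fin K → ℝ) (a : Fin K) (s : ℝ) :
    HasDerivAt (fun t => smax (fun b => z b + t * c b) a)
      (smax (fun b => z b + s * c b) a *
        (c a - ∑ b, smax (fun b' => z b' + s * c b') b * c b)) s := by
  have hD : HasDerivAt (fun t => ∑ b, Real.exp (z b + t * c b))
      (∑ b, c b * Real.exp (z b + s * c b)) s := by
    apply HasDerivAt.fun_sum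
    intro b _
    have h1 : HasDerivAt (fun t : ℝ => z b + t * c b) (c b) s := by
      simpa using ((hasDerivAt_id s).mul_const (c b)).const_add (z b)
    simpa [mul_comm] using h1.exp
  have hN : HasDerivAt (fun t => Real.exp (z a + t * c a))
      (c a * Real.exp (z a + s * c a)) s := by
    have h1 : HasDerivAt (fun t : ℝ => z a + t * c a) (c a) s := by
      simpa using ((hasDerivAt_id s).mul_const (c a)).const_add (z a)
    simpa [mul_comm] using h1.exp
  have hDpos := smax_denom_pos hK (fun b => z b + s * c b)
  have h2 : HasDerivAt (fun t => Real.exp (z a + t * c a) / ∑ b, Real.exp (z b + t * c b)) _ s :=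
    hN.div hD (ne_of_gt hDpos)
  convert h2 using 1
  · rfl
  have hS : ∑ b, smax (fun b' => z b' + s * c b') b * c b
      = (∑ b, c b * Real.exp (z b + s * c b)) / (∑ b, Real.exp (z b + s * c b)) := by
    rw [Finset.sum_div]
    refine Finset.sum_congr rfl fun b _ => ?_
    unfold smax
    ring
  rw [hS]
  unfold smax
  field_simp

noncomputable def pf (z c : Fin K → ℝ) (s : ℝ) : Fin K → ℝ := smax (fun b => z b + s * c b)

noncomputable def meanf (z c h : Fin K → ℝ) (s : ℝ) : ℝ := ∑ a, pf z c s a * h a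

noncomputable def meanD (z c h : Fin K → ℝ) (s : ℝ) : ℝ :=
  ∑ a, pf z c s a * (c a - meanf z c c s) * h a

lemma hasDerivAt_meanf (hK : 0 < K) (z c h : Fin K → ℝ) (s : ℝ) :
    HasDerivAt (fun t => meanf z c h t) (meanD z c h s) s := by
  unfold meanf meanD
  apply HasDerivAt.fun_sum
  intro a _
  exact (hasDerivAt_smax hK z c a s).mul_const (h a)

lemma hasDerivAt_meanD (hK : 0 < K) (z c h : Fin K → ℝ) (s : ℝ) :
    HasDerivAt (fun t => meanD z c h t)
      (∑ a, (pf z c s a * (c a - meanf z c c s) * ((c a - meanf z c c s) * h a)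
        + pf z c s a * (-(meanD z c c s) * h a))) s := by
  unfold meanD
  apply HasDerivAt.fun_sum
  intro a _
  have h1 : HasDerivAt (fun t => pf z c t a)
      (pf z c s a * (c a - meanf z c c s)) s := by
    exact hasDerivAt_smax hK z c a s
  have h2 : HasDerivAt (fun t => (c a - meanf z c c t) * h a)
      (-(meanD z c c s) * h a) s := by
    have := ((hasDerivAt_meanf hK z c c s).const_sub (c a)).mul_const (h a)
    simpa using this
  have hfe : (fun y => pf z c y a * (c a - meanf z c c y) * h a)
      = fun y => pf z c y a * ((c a - meanf z c c y) * h a) := by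
    funext y; ring
  rw [hfe]
  exact h1.mul h2

lemma pf_pos (hK : 0 < K) (z c : Fin K → ℝ) (s : ℝ) (a : Fin K) : 0 < pf z c s a :=
  smax_pos hK _ a

lemma pf_le_one (hK : 0 < K) (z c : Fin K → ℝ) (s : ℝ) (a : Fin K) : pf z c s a ≤ 1 :=
  smax_le_one hK _ a

lemma pf_sum (hK : 0 < K) (z c : Fin K → ℝ) (s : ℝ) : ∑ a, pf z c s a = 1 :=
  smax_sum hK _

lemma meanD_c_eq (hK : 0 < K) (z c : Fin K → ℝ) (s : ℝ) :
    meanD z c c s = ∑ a, pf z c s a * (c a - meanf z c c s)^2 := by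
  have hsum := pf_sum hK z c s
  set P := pf z c s
  set M := meanf z c c s with hM
  have hMsum : ∑ a, P a * c a = M := rfl
  have key : ∑ a, (P a * (c a - M) * c a - P a * (c a - M)^2)
      = ∑ a, (M * (P a * c a) - M * M * P a) := by
    refine Finset.sum_congr rfl fun a _ => ?_; ring
  rw [Finset.sum_sub_distrib, Finset.sum_sub_distrib, ← Finset.mul_sum, ← Finset.mul_sum,
    hMsum, hsum] at key
  unfold meanD
  have : ∑ a, P a * (c a - M) * c a - ∑ a, P a * (c a - M)^2 = 0 := by
    rw [key]; ring
  linarith [this]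

lemma meanD_c_nonneg (hK : 0 < K) (z c : Fin K → ℝ) (s : ℝ) : 0 ≤ meanD z c c s := by
  rw [meanD_c_eq hK]
  exact Finset.sum_nonneg fun a _ =>
    mul_nonneg (le_of_lt (smax_pos hK _ a)) (sq_nonneg _)

lemma meanD_c_le (hK : 0 < K) (z c : Fin K → ℝ) (s : ℝ) :
    meanD z c c s ≤ ∑ a, (c a)^2 := by
  rw [meanD_c_eq hK]
  have hsum := pf_sum hK z c s
  set P := pf z c s
  set M := meanf z c c s with hM
  have hMsum : ∑ a, P a * c a = M := rfl
  have key : ∑ a, P a * (c a - M)^2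
      = ∑ a, P a * (c a)^2 - 2 * M * M + M * M * 1 := by
    have : ∑ a, P a * (c a - M)^2
        = ∑ a, (P a * (c a)^2 - 2 * M * (P a * c a) + M * M * P a) := by
      refine Finset.sum_congr rfl fun a _ => ?_; ring
    rw [this, Finset.sum_add_distrib, Finset.sum_sub_distrib, ← Finset.mul_sum,
      ← Finset.mul_sum, hMsum, hsum]
  rw [key]
  have h1 : ∑ a, P a * (c a)^2 ≤ ∑ a, (c a)^2 := by
    apply Finset.sum_le_sum
    intro a _
    have := pf_le_one hK z c s a
    nlinarith [sq_nonneg (c a), pf_pos hK z c s a]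
  nlinarith [sq_nonneg M]

lemma meanf_abs_le (hK : 0 < K) (z c r : Fin K → ℝ) (s : ℝ) {Rmax : ℝ}
    (hr : ∀ a, |r a| ≤ Rmax) : |meanf z c r s| ≤ Rmax := by
  unfold meanf
  calc |∑ a, pf z c s a * r a| ≤ ∑ a, |pf z c s a * r a| := Finset.abs_sum_le_sum_abs _ _
    _ ≤ ∑ a, pf z c s a * Rmax := by
        apply Finset.sum_le_sum
        intro a _
        rw [abs_mul, abs_of_pos (pf_pos hK z c s a)]
        exact mul_le_mul_of_nonneg_left (hr a) (le_of_lt (pf_pos hK z c s a))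
    _ = Rmax := by rw [← Finset.sum_mul, pf_sum hK, one_mul]

lemma deriv2_bound (hK : 0 < K) (z c r : Fin K → ℝ) (s : ℝ) {Rmax : ℝ}
    (hr : ∀ a, |r a| ≤ Rmax) :
    |∑ a, (pf z c s a * (c a - meanf z c c s) * ((c a - meanf z c c s) * r a)
        + pf z c s a * (-(meanD z c c s) * r a))| ≤ 2 * Rmax * ∑ a, (c a)^2 := by
  have hRmax : 0 ≤ Rmax := le_trans (abs_nonneg _) (hr ⟨0, hK⟩)
  set P := pf z c s
  set M := meanf z c c s
  set V := meanD z c c s with hV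
  have hsplit : ∑ a, (P a * (c a - M) * ((c a - M) * r a) + P a * (-V * r a))
      = (∑ a, P a * (c a - M)^2 * r a) - V * meanf z c r s := by
    unfold meanf
    have he : ∀ a, P a * (c a - M) * ((c a - M) * r a) + P a * (-V * r a)
        = P a * (c a - M)^2 * r a - V * (P a * r a) := fun a => by ring
    rw [Finset.sum_congr rfl (fun a _ => he a), Finset.sum_sub_distrib, ← Finset.mul_sum]
  rw [hsplit]
  have h1 : |∑ a, P a * (c a - M)^2 * r a| ≤ Rmax * V := by
    rw [hV, meanD_c_eq hK, Finset.mul_sum]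
    calc |∑ a, P a * (c a - M)^2 * r a| ≤ ∑ a, |P a * (c a - M)^2 * r a| :=
          Finset.abs_sum_le_sum_abs _ _
      _ ≤ ∑ a, Rmax * (P a * (c a - M)^2) := by
          apply Finset.sum_le_sum
          intro a _
          rw [abs_mul, abs_of_nonneg (mul_nonneg (le_of_lt (pf_pos hK z c s a)) (sq_nonneg _))]
          calc P a * (c a - M)^2 * |r a| ≤ P a * (c a - M)^2 * Rmax := by
                apply mul_le_mul_of_nonneg_left (hr a)
                exact mul_nonneg (le_of_lt (pf_pos hK z c s a)) (sq_nonneg _)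
            _ = Rmax * (P a * (c a - M)^2) := by ring
      _ = ∑ a, Rmax * (P a * (c a - M)^2) := rfl
  have h2 : |V * meanf z c r s| ≤ V * Rmax := by
    rw [abs_mul, abs_of_nonneg (meanD_c_nonneg hK z c s)]
    exact mul_le_mul_of_nonneg_left (meanf_abs_le hK z c r s hr) (meanD_c_nonneg hK z c s)
  have hVle := meanD_c_le hK z c s
  have hVnn := meanD_c_nonneg hK z c s
  calc |(∑ a, P a * (c a - M)^2 * r a) - V * meanf z c r s|
      ≤ |∑ a, P a * (c a - M)^2 * r a| + |V * meanf z c r s| := abs_sub _ _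
    _ ≤ Rmax * V + V * Rmax := add_le_add h1 h2
    _ = 2 * Rmax * V := by ring
    _ ≤ 2 * Rmax * ∑ a, (c a)^2 := by
        apply mul_le_mul_of_nonneg_left hVle
        positivity

lemma ascent (hK : 0 < K) (z c r : Fin K → ℝ) {Rmax : ℝ} (hr : ∀ a, |r a| ≤ Rmax)
    {η : ℝ} (hη0 : 0 < η) :
    meanf z c r 0 + η * (meanD z c r 0 - η * (2 * Rmax * ∑ a, (c a)^2))
      ≤ meanf z c r η := by
  have hRmax : 0 ≤ Rmax := le_trans (abs_nonneg _) (hr ⟨0, hK⟩)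
  set B : ℝ := 2 * Rmax * ∑ a, (c a)^2 with hB
  have hBnn : 0 ≤ B := by positivity
  have hF : ∀ s, HasDerivAt (meanf z c r) (meanD z c r s) s := hasDerivAt_meanf hK z c r
  have hcont : ContinuousOn (meanf z c r) (Set.Icc 0 η) :=
    fun x _ => ((hF x).continuousAt).continuousWithinAt
  obtain ⟨ξ, hξmem, hξ⟩ := exists_hasDerivAt_eq_slope (meanf z c r) (meanD z c r) hη0
    hcont (fun x _ => hF x)
  have hξ0 : 0 < ξ := hξmem.1
  have hξη : ξ < η := hξmem.2
  set G : ℝ → ℝ := fun s => ∑ a, (pf z c s a * (c a - meanf z c c s)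
      * ((c a - meanf z c c s) * r a) + pf z c s a * (-(meanD z c c s) * r a)) with hG
  have hG' : ∀ s, HasDerivAt (meanD z c r) (G s) s := fun s => hasDerivAt_meanD hK z c r s
  have hcont2 : ContinuousOn (meanD z c r) (Set.Icc 0 ξ) :=
    fun x _ => ((hG' x).continuousAt).continuousWithinAt
  obtain ⟨ζ, hζmem, hζ⟩ := exists_hasDerivAt_eq_slope (meanD z c r) G hξ0
    hcont2 (fun x _ => hG' x)
  have hGbound : |G ζ| ≤ B := deriv2_bound hK z c r ζ hr
  -- from hζ : G ζ = (meanD z c r ξ - meanD z c r 0) / (ξ - 0)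
  have h1 : meanD z c r ξ = meanD z c r 0 + ξ * G ζ := by
    rw [sub_zero, eq_div_iff hξ0.ne'] at hζ
    linarith [hζ]
  have h2 : meanD z c r ξ ≥ meanD z c r 0 - η * B := by
    have : ξ * G ζ ≥ -(η * B) := by
      have hax : ξ * G ζ ≥ -(ξ * B) := by
        have := neg_abs_le (G ζ)
        nlinarith [abs_nonneg (G ζ)]
      have : ξ * B ≤ η * B := mul_le_mul_of_nonneg_right (le_of_lt hξη) hBnn
      linarith
    linarith
  have h3 : meanf z c r η = meanf z c r 0 + η * meanD z c r ξ := by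
    rw [sub_zero, eq_div_iff hη0.ne'] at hξ
    linarith [hξ]
  rw [h3]
  have := mul_le_mul_of_nonneg_left h2 (le_of_lt hη0)
  nlinarith [h2]

lemma cov_double (p f g : Fin K → ℝ) (hp : ∑ a, p a = 1) :
    ∑ a, ∑ b, p a * p b * ((f a - f b) * (g a - g b))
      = 2 * ((∑ a, p a * (f a * g a)) - (∑ a, p a * f a) * (∑ a, p a * g a)) := by
  have inner : ∀ a, ∑ b, p a * p b * ((f a - f b) * (g a - g b))
      = p a * (f a * g a) - (p a * f a) * (∑ b, p b * g b)
        - (p a * g a) * (∑ b, p b * f b) + p a * (∑ b, p b * (f b * g b)) := by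
    intro a
    have he : ∀ b, p a * p b * ((f a - f b) * (g a - g b))
        = (f a * g a * p a) * p b - (p a * f a) * (p b * g b)
          - (p a * g a) * (p b * f b) + p a * (p b * (f b * g b)) := fun b => by ring
    rw [Finset.sum_congr rfl (fun b _ => he b)]
    rw [Finset.sum_add_distrib, Finset.sum_sub_distrib, Finset.sum_sub_distrib,
      ← Finset.mul_sum, ← Finset.mul_sum, ← Finset.mul_sum, ← Finset.mul_sum, hp]
    ring
  rw [Finset.sum_congr rfl (fun a _ => inner a)]
  rw [Finset.sum_add_distrib, Finset.sum_sub_distrib, Finset.sum_sub_distrib,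
    ← Finset.sum_mul, ← Finset.sum_mul, ← Finset.sum_mul, hp]
  ring

lemma cov_lower (p f g : Fin K → ℝ) (hp : ∑ a, p a = 1) (hpos : ∀ a, 0 ≤ p a)
    (κ : ℝ) (hκ : 0 ≤ κ) (hco : ∀ a b, a ≠ b → κ ≤ (f a - f b) * (g a - g b)) :
    κ * (1 - ∑ a, (p a)^2)
      ≤ 2 * ((∑ a, p a * (f a * g a)) - (∑ a, p a * f a) * (∑ a, p a * g a)) := by
  rw [← cov_double p f g hp]
  have step : ∀ a b, (if a = b then (0:ℝ) else κ * (p a * p b))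
      ≤ p a * p b * ((f a - f b) * (g a - g b)) := by
    intro a b
    by_cases h : a = b
    · subst h; simp
    · simp only [if_neg h]
      have h1 : 0 ≤ p a * p b := mul_nonneg (hpos a) (hpos b)
      calc κ * (p a * p b) = (p a * p b) * κ := by ring
        _ ≤ (p a * p b) * ((f a - f b) * (g a - g b)) :=
            mul_le_mul_of_nonneg_left (hco a b h) h1
        _ = p a * p b * ((f a - f b) * (g a - g b)) := by ring
  have hsum : ∑ a, ∑ b, (if a = b then (0:ℝ) else κ * (p a * p b))
      = κ * (1 - ∑ a, (p a)^2) := by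
    have hin : ∀ a, ∑ b, (if a = b then (0:ℝ) else κ * (p a * p b))
        = κ * (p a - (p a)^2) := by
      intro a
      have he : ∀ b, (if a = b then (0:ℝ) else κ * (p a * p b))
          = κ * (p a * p b) - (if a = b then κ * (p a * p b) else 0) := by
        intro b; by_cases h : a = b <;> simp [h]
      rw [Finset.sum_congr rfl (fun b _ => he b), Finset.sum_sub_distrib,
        Finset.sum_ite_eq Finset.univ a (fun b => κ * (p a * p b))]
      simp only [Finset.mem_univ, if_pos]
      rw [← Finset.mul_sum, ← Finset.mul_sum, hp]
      ring
    rw [Finset.sum_congr rfl (fun a _ => hin a), ← Finset.mul_sum, Finset.sum_sub_distrib, hp]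
  calc κ * (1 - ∑ a, (p a)^2)
      = ∑ a, ∑ b, (if a = b then (0:ℝ) else κ * (p a * p b)) := hsum.symm
    _ ≤ ∑ a, ∑ b, p a * p b * ((f a - f b) * (g a - g b)) :=
        Finset.sum_le_sum fun a _ => Finset.sum_le_sum fun b _ => step a b


section Bridge
variable {d : ℕ} (X : Matrix (Fin K) (Fin d) ℝ) (r : Fin K → ℝ) (θ u : Fin d → ℝ)

lemma logits_line (s : ℝ) :
    (fun b => (∑ j, X b j * θ j) + s * (∑ j, X b j * u j))
      = fun b => ∑ j, X b j * (θ + s • u) j := by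
  funext b
  rw [Finset.mul_sum, ← Finset.sum_add_distrib]
  refine Finset.sum_congr rfl fun j _ => ?_
  simp [Pi.add_apply, Pi.smul_apply, smul_eq_mul]
  ring

lemma policy_pf (s : ℝ) :
    pf (fun a => ∑ j, X a j * θ j) (fun a => ∑ j, X a j * u j) s
      = policy X (θ + s • u) := by
  funext a
  unfold pf smax
  have h := fun b => congrFun (logits_line X θ u s) b
  show Real.exp ((∑ j, X a j * θ j) + s * ∑ j, X a j * u j)
      / (∑ b, Real.exp ((∑ j, X b j * θ j) + s * ∑ j, X b j * u j)) = _
  rw [h a]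
  unfold policy
  congr 1
  exact Finset.sum_congr rfl fun b _ => by rw [h b]

lemma expRwd_meanf (s : ℝ) :
    meanf (fun a => ∑ j, X a j * θ j) (fun a => ∑ j, X a j * u j) r s
      = expRwd X r (θ + s • u) := by
  unfold meanf expRwd
  rw [policy_pf]

lemma expRwd_meanf_zero :
    meanf (fun a => ∑ j, X a j * θ j) (fun a => ∑ j, X a j * u j) r 0
      = expRwd X r θ := by
  rw [expRwd_meanf]
  congr 1
  funext j
  simp

lemma policy_pf_zero :
    pf (fun a => ∑ j, X a j * θ j) (fun a => ∑ j, X a j * u j) 0 = policy X θ := by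
  rw [policy_pf]
  congr 1
  funext j
  simp

lemma grad_dot (hK : 0 < K) :
    meanD (fun a => ∑ j, X a j * θ j) (fun a => ∑ j, X a j * u j) r 0
      = ∑ j, u j * pgrad X r θ j := by
  unfold meanD pgrad
  rw [policy_pf_zero]
  set c : Fin K → ℝ := fun a => ∑ j, X a j * u j with hc
  set P := policy X θ with hP
  have hM : meanf (fun a => ∑ j, X a j * θ j) c c 0 = ∑ b, P b * c b := by
    unfold meanf
    rw [policy_pf_zero]
  rw [hM]
  set Er := expRwd X r θ with hEr
  have hErdef : Er = ∑ a, P a * r a := rfl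
  have hrhs : ∑ j, u j * ∑ a, X a j * (P a * (r a - Er))
      = ∑ a, c a * (P a * (r a - Er)) := by
    have h1 : ∀ j, u j * ∑ a, X a j * (P a * (r a - Er))
        = ∑ a, X a j * u j * (P a * (r a - Er)) := by
      intro j
      rw [Finset.mul_sum]
      exact Finset.sum_congr rfl fun a _ => by ring
    rw [Finset.sum_congr rfl fun j _ => h1 j, Finset.sum_comm]
    refine Finset.sum_congr rfl fun a _ => ?_
    rw [← Finset.sum_mul]
  rw [hrhs]
  have l1 : ∑ a, P a * (c a - ∑ b, P b * c b) * r a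
      = (∑ a, P a * c a * r a) - (∑ b, P b * c b) * (∑ a, P a * r a) := by
    rw [Finset.sum_congr rfl fun a _ => (by ring :
      P a * (c a - ∑ b, P b * c b) * r a
        = P a * c a * r a - (∑ b, P b * c b) * (P a * r a)),
      Finset.sum_sub_distrib, ← Finset.mul_sum]
  have r1 : ∑ a, c a * (P a * (r a - Er))
      = (∑ a, P a * c a * r a) - Er * (∑ a, P a * c a) := by
    rw [Finset.sum_congr rfl fun a _ => (by ring :
      c a * (P a * (r a - Er)) = P a * c a * r a - Er * (P a * c a)),
      Finset.sum_sub_distrib, ← Finset.mul_sum]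
  rw [l1, r1, hErdef]
  ring

end Bridge

lemma smax_lt_one (hK2 : 2 ≤ K) (z : Fin K → ℝ) (a : Fin K) : smax z a < 1 := by
  have hK : 0 < K := lt_of_lt_of_le (by norm_num) hK2
  have hK1 : 1 < K := lt_of_lt_of_le (by norm_num) hK2
  unfold smax
  rw [div_lt_one (smax_denom_pos hK z)]
  obtain ⟨b, hb⟩ : ∃ b : Fin K, b ≠ a := by
    by_cases h0 : a = ⟨0, hK⟩
    · exact ⟨⟨1, hK1⟩, by simp [h0, Fin.ext_iff]⟩
    · exact ⟨⟨0, hK⟩, fun h => h0 h.symm⟩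
  exact Finset.single_lt_sum hb (Finset.mem_univ a) (Finset.mem_univ b)
    (Real.exp_pos _) (fun k _ _ => le_of_lt (Real.exp_pos _))

lemma sum_sq_smax_lt_one (hK2 : 2 ≤ K) (z : Fin K → ℝ) :
    ∑ a, (smax z a)^2 < 1 := by
  have hK : 0 < K := lt_of_lt_of_le (by norm_num) hK2
  have h1 : ∑ a, (smax z a)^2 < ∑ a, smax z a := by
    apply Finset.sum_lt_sum_of_nonempty ⟨⟨0, hK⟩, Finset.mem_univ _⟩
    intro a _
    have hpos := smax_pos hK z a
    have hlt := smax_lt_one hK2 z a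
    nlinarith
  rw [smax_sum hK z] at h1
  exact h1

lemma meanD_cov (z c h : Fin K → ℝ) (s : ℝ) :
    meanD z c h s = (∑ a, pf z c s a * (c a * h a))
      - (∑ a, pf z c s a * c a) * (∑ a, pf z c s a * h a) := by
  unfold meanD
  have hM : meanf z c c s = ∑ b, pf z c s b * c b := rfl
  rw [Finset.sum_congr rfl fun a _ => (by rw [hM]; ring :
    pf z c s a * (c a - meanf z c c s) * h a
      = pf z c s a * (c a * h a) - (∑ b, pf z c s b * c b) * (pf z c s a * h a)),
    Finset.sum_sub_distrib, ← Finset.mul_sum]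

section Main
variable {d : ℕ} (X : Matrix (Fin K) (Fin d) ℝ) (r : Fin K → ℝ)

lemma cov_bound_policy (hK2 : 2 ≤ K) (w : Fin d → ℝ) (κ : ℝ)
    (hκle : ∀ a b : Fin K, a ≠ b →
      κ ≤ ((∑ j, X a j * w j) - (∑ j, X b j * w j)) * (r a - r b))
    (hκ : 0 ≤ κ) (φ : Fin d → ℝ) :
    κ * (1 - ∑ a, (policy X φ a)^2) ≤ 2 * ∑ j, w j * pgrad X r φ j := by
  have hK0 : 0 < K := lt_of_lt_of_le (by norm_num) hK2
  have hgd := grad_dot X r φ w hK0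
  rw [← hgd, meanD_cov, policy_pf_zero]
  have hps : ∑ a, policy X φ a = 1 :=
    smax_sum hK0 (fun a => ∑ j, X a j * φ j)
  have hpp : ∀ a, 0 ≤ policy X φ a := fun a =>
    le_of_lt (smax_pos hK0 (fun a => ∑ j, X a j * φ j) a)
  exact cov_lower (policy X φ) (fun a => ∑ j, X a j * w j) r hps hpp κ hκ hκle

lemma grad_sq_pos (hK2 : 2 ≤ K) (w : Fin d → ℝ) (κ : ℝ)
    (hκle : ∀ a b : Fin K, a ≠ b →
      κ ≤ ((∑ j, X a j * w j) - (∑ j, X b j * w j)) * (r a - r b))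
    (hκ : 0 < κ) (φ : Fin d → ℝ) :
    0 < ∑ j, (pgrad X r φ j)^2 := by
  have hK0 : 0 < K := lt_of_lt_of_le (by norm_num) hK2
  have hcb := cov_bound_policy X r hK2 w κ hκle (le_of_lt hκ) φ
  have hlt := sum_sq_smax_lt_one hK2 (fun a => ∑ j, X a j * φ j)
  have hpolsq : ∑ a, (policy X φ a)^2 < 1 := hlt
  have hdotpos : 0 < ∑ j, w j * pgrad X r φ j := by nlinarith
  by_contra hcon
  push_neg at hcon
  have hz : ∀ j, pgrad X r φ j = 0 := by
    intro j
    have h0 : ∑ j, (pgrad X r φ j)^2 = 0 :=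
      le_antisymm hcon (Finset.sum_nonneg fun j _ => sq_nonneg _)
    have := (Finset.sum_eq_zero_iff_of_nonneg (fun j _ => sq_nonneg (pgrad X r φ j))).1 h0
      j (Finset.mem_univ j)
    exact pow_eq_zero_iff (by norm_num) |>.1 this
  rw [Finset.sum_congr rfl (fun j _ => by rw [hz j, mul_zero])] at hdotpos
  simp at hdotpos

lemma step_ineq (hK2 : 2 ≤ K) {Rmax : ℝ} (hr : ∀ a, |r a| ≤ Rmax)
    {η : ℝ} (hη0 : 0 < η) (φ : Fin d → ℝ) :
    expRwd X r φ + η * ((∑ j, (pgrad X r φ j)^2)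
        - η * (2 * Rmax * (lamMax X * ∑ j, (pgrad X r φ j)^2)))
      ≤ expRwd X r (φ + η • pgrad X r φ) := by
  have hK0 : 0 < K := lt_of_lt_of_le (by norm_num) hK2
  have hRmax : 0 ≤ Rmax := le_trans (abs_nonneg _) (hr ⟨0, hK0⟩)
  set u := pgrad X r φ with hu
  set z : Fin K → ℝ := fun a => ∑ j, X a j * φ j with hz
  set c : Fin K → ℝ := fun a => ∑ j, X a j * u j with hc
  have hasc := ascent hK0 z c r hr hη0
  rw [expRwd_meanf X r φ u η, expRwd_meanf_zero X r φ u] at hasc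
  have hmd : meanD z c r 0 = ∑ j, (u j)^2 := by
    rw [grad_dot X r φ u hK0]
    exact Finset.sum_congr rfl fun j _ => (sq (u j)).symm
  rw [hmd] at hasc
  have hqf : ∑ a, (c a)^2 ≤ lamMax X * ∑ j, (u j)^2 := quadform_le X u
  have hfin : η * ((∑ j, (u j)^2) - η * (2 * Rmax * (lamMax X * ∑ j, (u j)^2)))
      ≤ η * ((∑ j, (u j)^2) - η * (2 * Rmax * ∑ a, (c a)^2)) := by
    have h1 : 2 * Rmax * ∑ a, (c a)^2 ≤ 2 * Rmax * (lamMax X * ∑ j, (u j)^2) := by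
      apply mul_le_mul_of_nonneg_left hqf
      positivity
    have h2 : η * (η * (2 * Rmax * ∑ a, (c a)^2))
        ≤ η * (η * (2 * Rmax * (lamMax X * ∑ j, (u j)^2))) :=
      mul_le_mul_of_nonneg_left (mul_le_mul_of_nonneg_left h1 hη0.le) hη0.le
    nlinarith [h2]
  linarith
end Main
/-- Monotonic improvement and one-hot limit for exact `Lin-SPG` with a small enough
constant learning rate. -/
theorem exact_linspg_monotone_and_onehot {K d : ℕ} (hK : 2 ≤ K) (hd : d ≤ K)
    (X : Matrix (Fin K) (Fin d) ℝ) (r : Fin K → ℝ)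
    (Rmax : ℝ) (hRmax : 0 < Rmax) (hr : ∀ a, |r a| ≤ Rmax)
    (hord : ∀ i j : Fin K, i < j → r j < r i)
    (hw : ∃ w : Fin d → ℝ, ∀ i j : Fin K,
      ((∑ k, X j k * w k) < ∑ k, X i k * w k ↔ r j < r i))
    (η : ℝ) (hη0 : 0 < η) (hη : η < 4 / (9 * Rmax * lamMax X))
    (θ : ℕ → Fin d → ℝ)
    (hupd : ∀ t, θ (t + 1) = θ t + η • pgrad X r (θ t)) :
    (∀ t : ℕ, expRwd X r (θ t) < expRwd X r (θ (t + 1))) ∧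
    (∃ a : Fin K, Filter.Tendsto (fun t => policy X (θ t) a) Filter.atTop (nhds 1)) := by
  classical
  have hK0 : 0 < K := lt_of_lt_of_le (by norm_num) hK
  have hK1 : 1 < K := lt_of_lt_of_le (by norm_num) hK
  obtain ⟨w, hwo⟩ := hw
  set cw : Fin K → ℝ := fun a => ∑ j, X a j * w j with hcw
  have hco : ∀ a b : Fin K, a ≠ b → 0 < (cw a - cw b) * (r a - r b) := by
    intro a b hab
    rcases lt_or_gt_of_ne hab with h | h
    · have hr1 : r b < r a := hord a b h
      have hc1 : cw b < cw a := (hwo a b).2 hr1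
      exact mul_pos (by linarith) (by linarith)
    · have hr1 : r a < r b := hord b a h
      have hc1 : cw a < cw b := (hwo b a).2 hr1
      exact mul_pos_of_neg_of_neg (by linarith) (by linarith)
  have hTne : (Finset.univ.offDiag : Finset (Fin K × Fin K)).Nonempty := by
    refine ⟨(⟨0, hK0⟩, ⟨1, hK1⟩), ?_⟩
    rw [Finset.mem_offDiag]
    exact ⟨Finset.mem_univ _, Finset.mem_univ _, by simp [Fin.ext_iff]⟩
  set κ : ℝ := Finset.inf' (Finset.univ.offDiag) hTne
    (fun q : Fin K × Fin K => (cw q.1 - cw q.2) * (r q.1 - r q.2)) with hκdef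
  have hκpos : 0 < κ := by
    rw [hκdef, Finset.lt_inf'_iff]
    intro q hq
    rw [Finset.mem_offDiag] at hq
    exact hco q.1 q.2 hq.2.2
  have hκle : ∀ a b : Fin K, a ≠ b → κ ≤ (cw a - cw b) * (r a - r b) := by
    intro a b hab
    exact Finset.inf'_le (fun q : Fin K × Fin K => (cw q.1 - cw q.2) * (r q.1 - r q.2))
      (show (a, b) ∈ Finset.univ.offDiag from
        Finset.mem_offDiag.2 ⟨Finset.mem_univ a, Finset.mem_univ b, hab⟩)
  have hlam : 0 < lamMax X := by
    by_contra hcon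
    push_neg at hcon
    have hq := quadform_le X w
    have hwsq : 0 ≤ ∑ j, (w j)^2 := Finset.sum_nonneg fun j _ => sq_nonneg _
    have h1 : lamMax X * ∑ j, (w j)^2 ≤ 0 := mul_nonpos_of_nonpos_of_nonneg hcon hwsq
    have h2 : ∑ a, (cw a)^2 ≤ 0 := le_trans hq h1
    have h3 : ∀ a, cw a = 0 := by
      intro a
      have h0 : ∑ a, (cw a)^2 = 0 :=
        le_antisymm h2 (Finset.sum_nonneg fun a _ => sq_nonneg _)
      have := (Finset.sum_eq_zero_iff_of_nonneg (fun a _ => sq_nonneg (cw a))).1 h0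
        a (Finset.mem_univ a)
      exact pow_eq_zero_iff two_ne_zero |>.1 this
    have hne : (⟨0, hK0⟩ : Fin K) ≠ ⟨1, hK1⟩ := by simp [Fin.ext_iff]
    have := hco ⟨0, hK0⟩ ⟨1, hK1⟩ hne
    rw [h3, h3] at this
    simp at this
  have hRlam : 0 < 9 * Rmax * lamMax X := by positivity
  rw [lt_div_iff₀ hRlam] at hη
  set κ1 : ℝ := 1 - 2 * Rmax * lamMax X * η with hκ1def
  have hκ1pos : 0 < κ1 := by
    rw [hκ1def]
    nlinarith [mul_pos (mul_pos hRmax hlam) hη0]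
  have hκlew : ∀ a b : Fin K, a ≠ b →
      κ ≤ ((∑ j, X a j * w j) - (∑ j, X b j * w j)) * (r a - r b) := hκle
  have hstep : ∀ t, expRwd X r (θ t) + η * κ1 * ∑ j, (pgrad X r (θ t) j)^2
      ≤ expRwd X r (θ (t + 1)) := by
    intro t
    rw [hupd t]
    have hsi := step_ineq X r hK hr hη0 (θ t)
    have heq : η * κ1 * ∑ j, (pgrad X r (θ t) j)^2
        = η * ((∑ j, (pgrad X r (θ t) j)^2)
            - η * (2 * Rmax * (lamMax X * ∑ j, (pgrad X r (θ t) j)^2))) := by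
      rw [hκ1def]; ring
    rw [heq]
    exact hsi
  have hgpos : ∀ t, 0 < ∑ j, (pgrad X r (θ t) j)^2 := fun t =>
    grad_sq_pos X r hK w κ hκlew hκpos (θ t)
  have part1 : ∀ t, expRwd X r (θ t) < expRwd X r (θ (t + 1)) := by
    intro t
    have h1 := hstep t
    have h2 : 0 < η * κ1 * ∑ j, (pgrad X r (θ t) j)^2 :=
      mul_pos (mul_pos hη0 hκ1pos) (hgpos t)
    linarith
  refine ⟨part1, ?_⟩
  set F : ℕ → ℝ := fun t => expRwd X r (θ t) with hFdef
  have hFb : ∀ t, |F t| ≤ Rmax := by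
    intro t
    have he := expRwd_meanf_zero X r (θ t) (fun _ => (0:ℝ))
    show |expRwd X r (θ t)| ≤ Rmax
    rw [← he]
    exact meanf_abs_le hK0 _ _ r 0 hr
  have hmono : Monotone F := monotone_nat_of_le_succ (fun t => (part1 t).le)
  have hbdd : BddAbove (Set.range F) :=
    ⟨Rmax, by rintro x ⟨t, rfl⟩; exact le_of_abs_le (hFb t)⟩
  have hFconv : Filter.Tendsto F Filter.atTop (nhds (⨆ t, F t)) :=
    tendsto_atTop_ciSup hmono hbdd
  set v : ℝ := ⨆ t, F t with hvdef
  have hdiff : Filter.Tendsto (fun t => F (t + 1) - F t) Filter.atTop (nhds 0) := by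
    have h1 : Filter.Tendsto (fun t => F (t + 1)) Filter.atTop (nhds v) :=
      hFconv.comp (Filter.tendsto_add_atTop_nat 1)
    simpa using h1.sub hFconv
  set G : ℕ → ℝ := fun t => ∑ j, (pgrad X r (θ t) j)^2 with hGdef
  have hGle : ∀ t, G t ≤ (F (t + 1) - F t) * (1 / (η * κ1)) := by
    intro t
    have h1 := hstep t
    rw [mul_one_div, le_div_iff₀ (mul_pos hη0 hκ1pos)]
    nlinarith [h1]
  have hG0 : Filter.Tendsto G Filter.atTop (nhds 0) := by
    have hup : Filter.Tendsto (fun t => (F (t + 1) - F t) * (1 / (η * κ1)))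
        Filter.atTop (nhds 0) := by
      simpa using hdiff.mul_const (1 / (η * κ1))
    exact tendsto_of_tendsto_of_tendsto_of_le_of_le tendsto_const_nhds hup
      (fun t => Finset.sum_nonneg fun j _ => sq_nonneg _) hGle
  set Dt : ℕ → ℝ := fun t => ∑ j, w j * pgrad X r (θ t) j with hDtdef
  have hCS : ∀ t, (Dt t)^2 ≤ (∑ j, (w j)^2) * G t := fun t =>
    Finset.sum_mul_sq_le_sq_mul_sq Finset.univ w (pgrad X r (θ t))
  have hD2 : Filter.Tendsto (fun t => (Dt t)^2) Filter.atTop (nhds 0) := by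
    have hup : Filter.Tendsto (fun t => (∑ j, (w j)^2) * G t) Filter.atTop (nhds 0) := by
      simpa using hG0.const_mul (∑ j, (w j)^2)
    exact tendsto_of_tendsto_of_tendsto_of_le_of_le tendsto_const_nhds hup
      (fun t => sq_nonneg _) hCS
  have hD0 : Filter.Tendsto Dt Filter.atTop (nhds 0) := by
    rw [tendsto_zero_iff_abs_tendsto_zero]
    have hsq := (Real.continuous_sqrt.tendsto 0).comp hD2
    rw [Real.sqrt_zero] at hsq
    exact hsq.congr fun t => Real.sqrt_sq_eq_abs (Dt t)
  set S : ℕ → ℝ := fun t => ∑ a, (policy X (θ t) a)^2 with hSdef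
  have hQle : ∀ t, 1 - S t ≤ 2 * Dt t / κ := by
    intro t
    have hcb := cov_bound_policy X r hK w κ hκlew hκpos.le (θ t)
    rw [le_div_iff₀ hκpos]
    nlinarith [hcb]
  have hQnn : ∀ t, 0 ≤ 1 - S t := by
    intro t
    have hSlt : S t < 1 := sum_sq_smax_lt_one hK (fun a => ∑ j, X a j * (θ t) j)
    linarith
  have hQ0 : Filter.Tendsto (fun t => 1 - S t) Filter.atTop (nhds 0) := by
    have hup : Filter.Tendsto (fun t => 2 * Dt t / κ) Filter.atTop (nhds 0) := by
      have := (hD0.const_mul 2).div_const κ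
      simpa using this
    exact tendsto_of_tendsto_of_tendsto_of_le_of_le tendsto_const_nhds hup hQnn hQle
  have hS1 : Filter.Tendsto S Filter.atTop (nhds 1) := by
    have := tendsto_const_nhds (x := (1:ℝ)) (f := Filter.atTop (α := ℕ)) |>.sub hQ0
    simpa using this
  have hamax : ∀ t, ∃ a : Fin K, ∀ b, policy X (θ t) b ≤ policy X (θ t) a := by
    intro t
    obtain ⟨a, _, ha⟩ := Finset.exists_max_image Finset.univ (policy X (θ t))
      ⟨⟨0, hK0⟩, Finset.mem_univ _⟩
    exact ⟨a, fun b => ha b (Finset.mem_univ b)⟩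
  choose A hA using hamax
  set m : ℕ → ℝ := fun t => policy X (θ t) (A t) with hmdef
  have hpol_nonneg : ∀ t a, 0 ≤ policy X (θ t) a := fun t a =>
    le_of_lt (smax_pos hK0 (fun b => ∑ j, X b j * (θ t) j) a)
  have hpol_sum : ∀ t, ∑ a, policy X (θ t) a = 1 := fun t =>
    smax_sum hK0 (fun b => ∑ j, X b j * (θ t) j)
  have hSlem : ∀ t, S t ≤ m t := by
    intro t
    calc S t = ∑ a, (policy X (θ t) a)^2 := rfl
      _ ≤ ∑ a, m t * policy X (θ t) a := by
          apply Finset.sum_le_sum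
          intro a _
          rw [sq]
          exact mul_le_mul_of_nonneg_right (hA t a) (hpol_nonneg t a)
      _ = m t * ∑ a, policy X (θ t) a := by rw [Finset.mul_sum]
      _ = m t := by rw [hpol_sum t, mul_one]
  have hmle1 : ∀ t, m t ≤ 1 := fun t =>
    smax_le_one hK0 (fun b => ∑ j, X b j * (θ t) j) (A t)
  have hm1 : Filter.Tendsto m Filter.atTop (nhds 1) :=
    tendsto_of_tendsto_of_tendsto_of_le_of_le hS1 tendsto_const_nhds hSlem hmle1
  have hFr : ∀ t, |F t - r (A t)| ≤ 2 * Rmax * (1 - m t) := by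
    intro t
    have hFeq : F t = ∑ a, policy X (θ t) a * r a := rfl
    have h1 : F t - r (A t) = ∑ a, policy X (θ t) a * (r a - r (A t)) := by
      rw [hFeq, Finset.sum_congr rfl fun a _ => (by ring :
        policy X (θ t) a * (r a - r (A t))
          = policy X (θ t) a * r a - r (A t) * policy X (θ t) a),
        Finset.sum_sub_distrib, ← Finset.mul_sum, hpol_sum t]
      ring
    rw [h1]
    calc |∑ a, policy X (θ t) a * (r a - r (A t))|
        ≤ ∑ a, |policy X (θ t) a * (r a - r (A t))| := Finset.abs_sum_le_sum_abs _ _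
      _ ≤ ∑ a, (policy X (θ t) a * (2 * Rmax)
            - (if A t = a then policy X (θ t) a * (2 * Rmax) else 0)) := by
          apply Finset.sum_le_sum
          intro a _
          by_cases hc : A t = a
          · subst hc
            simp
          · simp only [if_neg hc, sub_zero, abs_mul,
              abs_of_nonneg (hpol_nonneg t a)]
            apply mul_le_mul_of_nonneg_left _ (hpol_nonneg t a)
            calc |r a - r (A t)| ≤ |r a| + |r (A t)| := abs_sub _ _
              _ ≤ Rmax + Rmax := add_le_add (hr a) (hr (A t))
              _ = 2 * Rmax := by ring
      _ = 2 * Rmax * (1 - m t) := by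
          rw [Finset.sum_sub_distrib, ← Finset.sum_mul, hpol_sum t,
            Finset.sum_ite_eq Finset.univ (A t)
              (fun a => policy X (θ t) a * (2 * Rmax))]
          simp only [Finset.mem_univ, if_pos]
          rw [hmdef]
          ring
  have hFrA : Filter.Tendsto (fun t => F t - r (A t)) Filter.atTop (nhds 0) := by
    rw [tendsto_zero_iff_abs_tendsto_zero]
    have hup : Filter.Tendsto (fun t => 2 * Rmax * (1 - m t)) Filter.atTop (nhds 0) := by
      have h1 : Filter.Tendsto (fun t => 1 - m t) Filter.atTop (nhds 0) := by
        have := tendsto_const_nhds (x := (1:ℝ)) (f := Filter.atTop (α := ℕ)) |>.sub hm1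
        simpa using this
      simpa using h1.const_mul (2 * Rmax)
    exact tendsto_of_tendsto_of_tendsto_of_le_of_le tendsto_const_nhds hup
      (fun t => abs_nonneg _) (fun t => hFr t)
  have hrA : Filter.Tendsto (fun t => r (A t)) Filter.atTop (nhds v) := by
    have := hFconv.sub hFrA
    simpa using this
  have hvmem : v ∈ Set.range r := by
    have hcl : IsClosed (Set.range r) := (Set.finite_range r).isClosed
    exact hcl.mem_of_tendsto hrA (Filter.Eventually.of_forall fun t => ⟨A t, rfl⟩)
  obtain ⟨astar, hastar⟩ := hvmem
  have hev : ∀ᶠ t in Filter.atTop, r (A t) = v := by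
    set T := (Finset.univ.image r).filter (fun s => s ≠ v) with hTdef
    by_cases hTne2 : T.Nonempty
    · set ε := T.inf' hTne2 (fun s => |s - v|) with hεdef
      have hεpos : 0 < ε := by
        rw [hεdef, Finset.lt_inf'_iff]
        intro s hs
        rw [hTdef, Finset.mem_filter] at hs
        exact abs_pos.2 (sub_ne_zero.2 hs.2)
      obtain ⟨N, hN⟩ := Metric.tendsto_atTop.1 hrA ε hεpos
      refine Filter.eventually_atTop.2 ⟨N, fun t ht => ?_⟩
      by_contra hne
      have hmem : r (A t) ∈ T := by
        rw [hTdef, Finset.mem_filter]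
        exact ⟨Finset.mem_image_of_mem r (Finset.mem_univ _), hne⟩
      have hle2 : ε ≤ |r (A t) - v| := Finset.inf'_le (fun s => |s - v|) hmem
      have hd := hN t ht
      rw [Real.dist_eq] at hd
      linarith
    · refine Filter.Eventually.of_forall fun t => ?_
      by_contra hne
      exact hTne2 ⟨r (A t), by
        rw [hTdef, Finset.mem_filter]
        exact ⟨Finset.mem_image_of_mem r (Finset.mem_univ _), hne⟩⟩
  have hrinj : ∀ a b : Fin K, r a = r b → a = b := by
    intro a b hab
    by_contra hne
    have := hco a b hne
    rw [hab] at this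
    simp at this
  have hevA : ∀ᶠ t in Filter.atTop, A t = astar :=
    hev.mono fun t ht => hrinj _ _ (ht.trans hastar.symm)
  refine ⟨astar, ?_⟩
  apply Filter.Tendsto.congr' _ hm1
  exact hevA.mono fun t ht => by rw [hmdef]; simp only []; rw [ht]
end

section
/- Let K = 3 with rewards r(1) > r(2) > r(3), |r(a)| ≤ R_max, and suppose there exists w ∈ ℝ^d such that Xw preserves the ordering of r, but ⟨x_2 − x_3, x_1 − x_3⟩ < 0. Define ζ = (⟨x_3 − x_2, x_1 − x_3⟩ / ⟨x_1 − x_2, x_1 − x_3⟩) · ((⟨π_{θ_1}, r⟩ − r(3)) / (r(1) − ⟨π_{θ_1}, r⟩)). If the initialization θ_1 satisfies π_{θ_1}(1)/π_{θ_1}(3) < ζ (in particular, θ_1 = C(x_3 − x_1) with C > −log(ζ)/‖x_3 − x_1‖₂² has this property), then exact Lin-SPG with constant learning rate η ∈ (0, 4/(9 R_max λ_max(X^⊤X))) satisfies π_{θ_t}(1)/π_{θ_t}(3) < ζ for all t ≥ 1, and consequently it fails to converge to the optimal policy: lim_{t→∞} π_{θ_t}(1) ≠ 1. -/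
open scoped BigOperators

section Aux

/-- linear expansion of the second-derivative numerator -/
lemma num_expand {ι : Type*} [Fintype ι] (e u rr : ι → ℝ) (Dv D1v Nv : ℝ)
    (hD : Dv = ∑ a, e a) (hD1 : D1v = ∑ a, u a * e a) (hN : Nv = ∑ a, e a * rr a) :
    ∑ a, e a * ((u a * Dv - D1v) ^ 2 * (rr a * Dv - Nv))
      = Dv ^ 3 * (∑ a, u a * (u a * e a) * rr a) - Dv ^ 2 * Nv * (∑ a, u a * (u a * e a))
        - 2 * Dv ^ 2 * D1v * (∑ a, u a * e a * rr a) + 2 * Dv * D1v ^ 2 * Nv := by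
  have step : ∀ a ∈ Finset.univ (α := ι),
      e a * ((u a * Dv - D1v) ^ 2 * (rr a * Dv - Nv))
        = Dv ^ 3 * (u a * (u a * e a) * rr a) - Dv ^ 2 * Nv * (u a * (u a * e a))
          - 2 * Dv ^ 2 * D1v * (u a * e a * rr a) + 2 * Dv * D1v * Nv * (u a * e a)
          + Dv * D1v ^ 2 * (e a * rr a) - D1v ^ 2 * Nv * e a := by
    intro a _; ring
  rw [Finset.sum_congr rfl step]
  simp only [Finset.sum_add_distrib, Finset.sum_sub_distrib, ← Finset.mul_sum]
  rw [← hD1, ← hN, ← hD]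
  ring

lemma first_deriv_form {ι : Type*} [Fintype ι] (e u rr : ι → ℝ) (Dv Nv : ℝ) (hDv : Dv ≠ 0)
    (hD : Dv = ∑ a, e a) (hN : Nv = ∑ a, e a * rr a) :
    ((∑ a, u a * e a * rr a) * Dv - Nv * (∑ a, u a * e a)) / Dv ^ 2
      = ∑ a, u a * (e a / Dv * (rr a - Nv / Dv)) := by
  have per : ∀ a ∈ Finset.univ (α := ι), u a * (e a / Dv * (rr a - Nv / Dv))
      = (u a * e a * rr a * Dv - Nv * (u a * e a)) / Dv ^ 2 := by
    intro a _; field_simp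
  rw [Finset.sum_congr rfl per, ← Finset.sum_div]
  congr 1
  simp only [Finset.sum_sub_distrib, ← Finset.sum_mul, ← Finset.mul_sum]

lemma var_bound {ι : Type*} [Fintype ι] (p u rr : ι → ℝ) (ub R Rmax : ℝ)
    (hRmax : 0 ≤ Rmax)
    (hp0 : ∀ a, 0 ≤ p a) (hp1 : ∀ a, p a ≤ 1) (hpsum : ∑ a, p a = 1)
    (hub : ub = ∑ a, p a * u a) (hr : ∀ a, |rr a| ≤ Rmax) (hR : |R| ≤ Rmax) :
    |∑ a, p a * ((u a - ub) ^ 2 * (rr a - R))| ≤ 2 * Rmax * ∑ a, u a ^ 2 := by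
  have habs : ∀ a, |rr a - R| ≤ 2 * Rmax := by
    intro a
    have h1 := abs_le.mp (hr a); have h2 := abs_le.mp hR
    rw [abs_le]; constructor <;> linarith [h1.1, h1.2, h2.1, h2.2]
  calc |∑ a, p a * ((u a - ub) ^ 2 * (rr a - R))|
      ≤ ∑ a, |p a * ((u a - ub) ^ 2 * (rr a - R))| := Finset.abs_sum_le_sum_abs _ _
    _ ≤ ∑ a, p a * ((u a - ub) ^ 2 * (2 * Rmax)) := by
        apply Finset.sum_le_sum
        intro a _
        rw [abs_mul, abs_mul, abs_of_nonneg (hp0 a), abs_of_nonneg (sq_nonneg _)]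
        exact mul_le_mul_of_nonneg_left
          (mul_le_mul_of_nonneg_left (habs a) (sq_nonneg _)) (hp0 a)
    _ = 2 * Rmax * ∑ a, p a * (u a - ub) ^ 2 := by
        rw [Finset.mul_sum]; apply Finset.sum_congr rfl; intro a _; ring
    _ ≤ 2 * Rmax * ∑ a, p a * u a ^ 2 := by
        have key : ∑ a, p a * (u a - ub) ^ 2
            = (∑ a, p a * u a ^ 2) - 2 * ub * (∑ a, p a * u a) + ub ^ 2 * (∑ a, p a) := by
          have per : ∀ a ∈ Finset.univ (α := ι), p a * (u a - ub) ^ 2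
              = p a * u a ^ 2 - 2 * ub * (p a * u a) + ub ^ 2 * p a := by
            intro a _; ring
          rw [Finset.sum_congr rfl per]
          simp only [Finset.sum_add_distrib, Finset.sum_sub_distrib, ← Finset.mul_sum]
        have h4 : ∑ a, p a * (u a - ub) ^ 2 = (∑ a, p a * u a ^ 2) - ub ^ 2 := by
          rw [key, ← hub, hpsum]; ring
        nlinarith [sq_nonneg ub]
    _ ≤ 2 * Rmax * ∑ a, u a ^ 2 := by
        have : ∑ a, p a * u a ^ 2 ≤ ∑ a, u a ^ 2 := by
          apply Finset.sum_le_sum; intro a _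
          nlinarith [hp1 a, hp0 a, sq_nonneg (u a)]
        nlinarith

lemma taylor_lb (φ F F' : ℝ → ℝ) (M : ℝ) (hM : 0 ≤ M)
    (hφ : ∀ s, HasDerivAt φ (F s) s)
    (hF : ∀ s, HasDerivAt F (F' s) s)
    (hbound : ∀ s, |F' s| ≤ M) :
    φ 0 + F 0 - M / 2 ≤ φ 1 := by
  have lip : ∀ s : ℝ, |F s - F 0| ≤ M * |s| := by
    intro s
    have := Convex.norm_image_sub_le_of_norm_hasDerivWithin_le
      (f := F) (f' := F') (s := Set.univ) (C := M)
      (fun x _ => (hF x).hasDerivWithinAt) (fun x _ => by simpa using hbound x)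
      convex_univ (Set.mem_univ 0) (Set.mem_univ s)
    simpa [Real.norm_eq_abs] using this
  set ψ : ℝ → ℝ := fun s => φ s - s * F 0 + M / 2 * s ^ 2 with hψdef
  have hψ : ∀ s, HasDerivAt ψ (F s - F 0 + M * s) s := by
    intro s
    have h1 : HasDerivAt (fun s : ℝ => s * F 0) (F 0) s := by
      simpa using (hasDerivAt_id s).mul_const (F 0)
    have h2 : HasDerivAt (fun s : ℝ => M / 2 * s ^ 2) (M * s) s := by
      have := (hasDerivAt_pow 2 s).const_mul (M / 2)
      exact this.congr_deriv (by norm_num; ring)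
    exact ((hφ s).sub h1).add h2
  have hmono : MonotoneOn ψ (Set.Icc (0:ℝ) 1) := by
    apply monotoneOn_of_deriv_nonneg (convex_Icc 0 1)
    · exact fun x _ => ((hψ x).continuousAt).continuousWithinAt
    · intro x _
      exact ((hψ x).differentiableAt).differentiableWithinAt
    · intro x hx
      rw [interior_Icc] at hx
      rw [(hψ x).deriv]
      have h1 := lip x
      have h2 : |x| = x := abs_of_pos hx.1
      have := abs_le.mp h1
      nlinarith [hx.1.le, this.1]
  have h01 := hmono (Set.mem_Icc.mpr ⟨le_refl 0, zero_le_one⟩)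
    (Set.mem_Icc.mpr ⟨zero_le_one, le_refl 1⟩) zero_le_one
  simp only [hψdef] at h01
  nlinarith [h01]

lemma softmax_ascent {ι : Type*} [Fintype ι] [Nonempty ι] (z u rr : ι → ℝ) (Rmax lamu : ℝ)
    (hRmax : 0 ≤ Rmax) (hr : ∀ a, |rr a| ≤ Rmax) (hu : ∑ a, u a ^ 2 ≤ lamu) :
    (∑ a, Real.exp (z a) * rr a) / (∑ a, Real.exp (z a))
      + ((∑ a, u a * (Real.exp (z a) / (∑ b, Real.exp (z b))
          * (rr a - (∑ b, Real.exp (z b) * rr b) / (∑ b, Real.exp (z b)))))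
      - Rmax * lamu)
      ≤ (∑ a, Real.exp (z a + u a) * rr a) / (∑ a, Real.exp (z a + u a)) := by
  classical
  set e : ℝ → ι → ℝ := fun s a => Real.exp (z a + s * u a) with he_def
  set D : ℝ → ℝ := fun s => ∑ a, e s a with hD_def
  set N : ℝ → ℝ := fun s => ∑ a, e s a * rr a with hN_def
  set D1 : ℝ → ℝ := fun s => ∑ a, u a * e s a with hD1_def
  set N1 : ℝ → ℝ := fun s => ∑ a, u a * e s a * rr a with hN1_def
  set D2 : ℝ → ℝ := fun s => ∑ a, u a * (u a * e s a) with hD2_def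
  set N2 : ℝ → ℝ := fun s => ∑ a, u a * (u a * e s a) * rr a with hN2_def
  set φ : ℝ → ℝ := fun s => N s / D s with hφ_def
  set F : ℝ → ℝ := fun s => (N1 s * D s - N s * D1 s) / D s ^ 2 with hF_def
  set F' : ℝ → ℝ := fun s => ((N2 s * D s - N s * D2 s) * D s ^ 2
      - (N1 s * D s - N s * D1 s) * (2 * D s * D1 s)) / (D s ^ 2) ^ 2 with hF'_def
  have hDpos : ∀ s, 0 < D s := by
    intro s
    rw [hD_def]
    exact Finset.sum_pos (fun a _ => Real.exp_pos _) Finset.univ_nonempty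
  have he : ∀ s a, HasDerivAt (fun t => e t a) (u a * e s a) s := by
    intro s a
    have h1 : HasDerivAt (fun t : ℝ => z a + t * u a) (u a) s := by
      simpa using ((hasDerivAt_id s).mul_const (u a)).const_add (z a)
    have h2 := h1.exp
    rw [he_def]
    simpa [mul_comm] using h2
  have hD' : ∀ s, HasDerivAt D (D1 s) s := by
    intro s
    rw [hD_def, hD1_def]
    exact HasDerivAt.fun_sum fun a _ => he s a
  have hN' : ∀ s, HasDerivAt N (N1 s) s := by
    intro s
    rw [hN_def, hN1_def]
    exact HasDerivAt.fun_sum fun a _ => (he s a).mul_const (rr a)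
  have hD1' : ∀ s, HasDerivAt D1 (D2 s) s := by
    intro s
    rw [hD1_def, hD2_def]
    exact HasDerivAt.fun_sum fun a _ => (he s a).const_mul (u a)
  have hN1' : ∀ s, HasDerivAt N1 (N2 s) s := by
    intro s
    rw [hN1_def, hN2_def]
    exact HasDerivAt.fun_sum fun a _ => ((he s a).const_mul (u a)).mul_const (rr a)
  have hφ' : ∀ s, HasDerivAt φ (F s) s := by
    intro s
    rw [hφ_def, hF_def]
    exact (hN' s).div (hD' s) (hDpos s).ne'
  have hF'' : ∀ s, HasDerivAt F (F' s) s := by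
    intro s
    have hP : HasDerivAt (fun t => N1 t * D t - N t * D1 t) (N2 s * D s - N s * D2 s) s := by
      have h := ((hN1' s).mul (hD' s)).sub ((hN' s).mul (hD1' s))
      exact h.congr_deriv (by ring)
    have hQ : HasDerivAt (fun t => D t ^ 2) (2 * D s * D1 s) s := by
      have h := (hD' s).pow 2
      exact h.congr_deriv (by push_cast; ring)
    have := hP.fun_div hQ (pow_ne_zero 2 (hDpos s).ne')
    rw [hF_def, hF'_def]
    exact this
  set M : ℝ := 2 * Rmax * lamu with hM_def
  have husq : 0 ≤ ∑ a, u a ^ 2 := Finset.sum_nonneg fun a _ => sq_nonneg _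
  have hlamu : 0 ≤ lamu := le_trans husq hu
  have hM : 0 ≤ M := by rw [hM_def]; positivity
  have hbound : ∀ s, |F' s| ≤ M := by
    intro s
    have hDs : D s ≠ 0 := (hDpos s).ne'
    have eD : D s = ∑ a, e s a := by rw [hD_def]
    have eN : N s = ∑ a, e s a * rr a := by rw [hN_def]
    have eD1 : D1 s = ∑ a, u a * e s a := by rw [hD1_def]
    have eN1 : N1 s = ∑ a, u a * e s a * rr a := by rw [hN1_def]
    have eD2 : D2 s = ∑ a, u a * (u a * e s a) := by rw [hD2_def]
    have eN2 : N2 s = ∑ a, u a * (u a * e s a) * rr a := by rw [hN2_def]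
    have hnum : ∑ a, e s a * ((u a * D s - D1 s) ^ 2 * (rr a * D s - N s))
        = D s ^ 3 * N2 s - D s ^ 2 * N s * D2 s - 2 * D s ^ 2 * D1 s * N1 s
          + 2 * D s * D1 s ^ 2 * N s := by
      rw [num_expand (e s) u rr (D s) (D1 s) (N s) eD eD1 eN, ← eN1, ← eN2, ← eD2]
    have keyform : F' s = ∑ a, e s a / D s
        * ((u a - D1 s / D s) ^ 2 * (rr a - N s / D s)) := by
      have per : ∀ a ∈ Finset.univ (α := ι),
          e s a / D s * ((u a - D1 s / D s) ^ 2 * (rr a - N s / D s))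
            = e s a * ((u a * D s - D1 s) ^ 2 * (rr a * D s - N s)) / D s ^ 4 := by
        intro a _
        have h1 : u a - D1 s / D s = (u a * D s - D1 s) / D s := by field_simp
        have h2 : rr a - N s / D s = (rr a * D s - N s) / D s := by field_simp
        rw [h1, h2, div_pow, div_mul_div_comm, div_mul_div_comm,
          show D s * (D s ^ 2 * D s) = D s ^ 4 from by ring]
      rw [Finset.sum_congr rfl per, ← Finset.sum_div, hnum, hF'_def]
      rw [div_eq_div_iff (pow_ne_zero 2 (pow_ne_zero 2 hDs)) (pow_ne_zero 4 hDs)]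
      ring
    rw [keyform]
    have hp0 : ∀ a, 0 ≤ e s a / D s := fun a => by positivity
    have hp1 : ∀ a, e s a / D s ≤ 1 := by
      intro a
      rw [div_le_one (hDpos s)]
      rw [eD]
      exact Finset.single_le_sum (f := e s) (fun b _ => (Real.exp_pos _).le) (Finset.mem_univ a)
    have hpsum : ∑ a, e s a / D s = 1 := by
      rw [← Finset.sum_div, ← eD, div_self hDs]
    have hub : D1 s / D s = ∑ a, (e s a / D s) * u a := by
      have per : ∀ a ∈ Finset.univ (α := ι), (e s a / D s) * u a = u a * e s a / D s := by
        intro a _; ring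
      rw [Finset.sum_congr rfl per, ← Finset.sum_div, ← eD1]
    have hRR : |N s / D s| ≤ Rmax := by
      rw [abs_div, abs_of_pos (hDpos s), div_le_iff₀ (hDpos s)]
      calc |N s| ≤ ∑ a, |e s a * rr a| := by rw [eN]; exact Finset.abs_sum_le_sum_abs _ _
        _ ≤ ∑ a, e s a * Rmax := by
            apply Finset.sum_le_sum
            intro a _
            rw [abs_mul, abs_of_pos (Real.exp_pos _)]
            exact mul_le_mul_of_nonneg_left (hr a) (Real.exp_pos _).le
        _ = Rmax * D s := by rw [eD, Finset.mul_sum]; apply Finset.sum_congr rfl; intro a _; ring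
    calc |∑ a, e s a / D s * ((u a - D1 s / D s) ^ 2 * (rr a - N s / D s))|
        ≤ 2 * Rmax * ∑ a, u a ^ 2 :=
          var_bound (fun a => e s a / D s) u rr (D1 s / D s) (N s / D s) Rmax hRmax
            hp0 hp1 hpsum hub hr hRR
      _ ≤ M := by rw [hM_def]; nlinarith
  have main := taylor_lb φ F F' M hM hφ' hF'' hbound
  have hφ0 : φ 0 = (∑ a, Real.exp (z a) * rr a) / (∑ a, Real.exp (z a)) := by
    simp [hφ_def, hN_def, hD_def, he_def]
  have hφ1 : φ 1 = (∑ a, Real.exp (z a + u a) * rr a) / (∑ a, Real.exp (z a + u a)) := by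
    simp [hφ_def, hN_def, hD_def, he_def]
  have hF0 : F 0 = ∑ a, u a * (Real.exp (z a) / (∑ b, Real.exp (z b))
      * (rr a - (∑ b, Real.exp (z b) * rr b) / (∑ b, Real.exp (z b)))) := by
    have h := first_deriv_form (e 0) u rr (D 0) (N 0) (hDpos 0).ne'
      (by rw [hD_def]) (by rw [hN_def])
    rw [hF_def]
    simp only [hN1_def, hD1_def] at h ⊢
    rw [h]
    simp [he_def, hD_def, hN_def]
  rw [hφ0, hφ1, hF0] at main
  have hM2 : M / 2 = Rmax * lamu := by rw [hM_def]; ring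
  linarith [main]

open Matrix in
lemma dot_trans' {m n : Type*} [Fintype m] [Fintype n] (M : Matrix m n ℝ) (v : m → ℝ)
    (x : n → ℝ) : v ⬝ᵥ (M *ᵥ x) = (Mᵀ *ᵥ v) ⬝ᵥ x := by
  rw [Matrix.dotProduct_mulVec, ← Matrix.mulVec_transpose]

open Matrix in
lemma quad_le {K d : ℕ} (hd : 0 < d) (X : Matrix (Fin K) (Fin d) ℝ) (v : Fin d → ℝ) :
    ∑ a, (∑ j, X a j * v j) ^ 2 ≤ lamMax X * ∑ j, v j ^ 2 := by
  haveI : NeZero d := ⟨hd.ne'⟩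
  have hA := Matrix.isHermitian_conjTranspose_mul_self X
  have hXT : Xᴴ = Xᵀ := Matrix.conjTranspose_eq_transpose_of_trivial X
  set U : Matrix (Fin d) (Fin d) ℝ := (hA.eigenvectorUnitary : Matrix (Fin d) (Fin d) ℝ) with hU
  have hUmem : U ∈ Matrix.unitaryGroup (Fin d) ℝ := hA.eigenvectorUnitary.2
  have hUU' : U * star U = 1 := Matrix.mem_unitaryGroup_iff.mp hUmem
  have hstar : star U = Uᵀ := by
    rw [Matrix.star_eq_conjTranspose, Matrix.conjTranspose_eq_transpose_of_trivial]
  set w : Fin d → ℝ := Uᵀ *ᵥ v with hw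
  have h1 : ∑ a, (∑ j, X a j * v j) ^ 2 = v ⬝ᵥ ((Xᴴ * X) *ᵥ v) := by
    have e1 : ∑ a, (∑ j, X a j * v j) ^ 2 = (X *ᵥ v) ⬝ᵥ (X *ᵥ v) := by
      simp [Matrix.mulVec, dotProduct, pow_two]
    rw [e1, hXT, ← Matrix.mulVec_mulVec, dot_trans']
    exact dotProduct_comm _ _
  have h2 : v ⬝ᵥ ((Xᴴ * X) *ᵥ v) = w ⬝ᵥ (Matrix.diagonal hA.eigenvalues *ᵥ w) := by
    conv_lhs => rw [hA.spectral_theorem, Unitary.conjStarAlgAut_apply]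
    rw [hstar, ← Matrix.mulVec_mulVec, ← Matrix.mulVec_mulVec, ← hw, dot_trans', ← hw,
      RCLike.ofReal_real_eq_id, Function.id_comp]
  have h3 : w ⬝ᵥ w = ∑ j, v j ^ 2 := by
    have e2 : w ⬝ᵥ w = v ⬝ᵥ ((U * Uᵀ) *ᵥ v) := by
      rw [← Matrix.mulVec_mulVec, hw, dot_trans', Matrix.transpose_transpose]
      exact dotProduct_comm _ _
    rw [e2, ← hstar, hUU', Matrix.one_mulVec]
    simp [dotProduct, pow_two]
  have hbdd : BddAbove (Set.range hA.eigenvalues) := Set.finite_range _ |>.bddAbove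
  have hle : ∀ i, hA.eigenvalues i ≤ lamMax X := fun i => le_ciSup hbdd i
  rw [h1, h2, ← h3]
  have h4 : w ⬝ᵥ (Matrix.diagonal hA.eigenvalues *ᵥ w) = ∑ i, hA.eigenvalues i * w i ^ 2 := by
    simp only [dotProduct, Matrix.mulVec_diagonal]
    apply Finset.sum_congr rfl; intro i _; ring
  have h5 : w ⬝ᵥ w = ∑ i, w i ^ 2 := by simp [dotProduct, pow_two]
  rw [h4, h5, Finset.mul_sum]
  apply Finset.sum_le_sum
  intro i _
  exact mul_le_mul_of_nonneg_right (hle i) (sq_nonneg (w i))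

lemma sum_swap_form {K d : ℕ} (X : Matrix (Fin K) (Fin d) ℝ) (v : Fin d → ℝ) (w : Fin K → ℝ) :
    ∑ a, (∑ j, X a j * v j) * w a = ∑ j, v j * (∑ a, X a j * w a) := by
  have per : ∀ a ∈ Finset.univ (α := Fin K),
      (∑ j, X a j * v j) * w a = ∑ j, X a j * v j * w a := by
    intro a _; rw [Finset.sum_mul]
  rw [Finset.sum_congr rfl per, Finset.sum_comm]
  apply Finset.sum_congr rfl; intro j _
  rw [Finset.mul_sum]; apply Finset.sum_congr rfl; intro a _; ring

lemma expRwd_eq {K d : ℕ} (X : Matrix (Fin K) (Fin d) ℝ) (r : Fin K → ℝ) (ψ : Fin d → ℝ) :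
    expRwd X r ψ = (∑ a, Real.exp (∑ j, X a j * ψ j) * r a)
      / (∑ a, Real.exp (∑ j, X a j * ψ j)) := by
  unfold expRwd policy
  simp only [div_mul_eq_mul_div]
  rw [Finset.sum_div]

lemma expRwd_ascent {K d : ℕ} [NeZero K] (X : Matrix (Fin K) (Fin d) ℝ) (r : Fin K → ℝ)
    (Rmax lam : ℝ) (hRmax : 0 ≤ Rmax) (hr : ∀ a, |r a| ≤ Rmax)
    (hlam : ∀ v : Fin d → ℝ, ∑ a, (∑ j, X a j * v j) ^ 2 ≤ lam * ∑ j, v j ^ 2)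
    (η : ℝ) (hη0 : 0 ≤ η) (hsmall : η * (Rmax * lam) ≤ 1) (θ : Fin d → ℝ) :
    expRwd X r θ ≤ expRwd X r (θ + η • pgrad X r θ) := by
  haveI : Nonempty (Fin K) := Fin.pos_iff_nonempty.mp (Nat.pos_of_ne_zero (NeZero.ne K))
  set g : Fin d → ℝ := pgrad X r θ with hg
  set z : Fin K → ℝ := fun a => ∑ j, X a j * θ j with hz
  set u : Fin K → ℝ := fun a => ∑ j, X a j * (η * g j) with hu
  set lamu : ℝ := lam * ∑ j, (η * g j) ^ 2 with hlamu
  have hG : 0 ≤ ∑ j, g j ^ 2 := Finset.sum_nonneg fun _ _ => sq_nonneg _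
  have hu2 : ∑ a, u a ^ 2 ≤ lamu := by
    rw [hu, hlamu]; exact hlam (fun j => η * g j)
  have key := softmax_ascent z u r Rmax lamu hRmax hr hu2
  -- identify first endpoint
  have h0 : expRwd X r θ = (∑ a, Real.exp (z a) * r a) / (∑ a, Real.exp (z a)) := by
    rw [expRwd_eq, hz]
  -- identify second endpoint
  have h1 : expRwd X r (θ + η • g) = (∑ a, Real.exp (z a + u a) * r a)
      / (∑ a, Real.exp (z a + u a)) := by
    rw [expRwd_eq]
    have hlog : ∀ a, ∑ j, X a j * (θ + η • g) j = z a + u a := by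
      intro a
      simp only [Pi.add_apply, Pi.smul_apply, smul_eq_mul, hz, hu, ← Finset.sum_add_distrib]
      apply Finset.sum_congr rfl; intro j _; ring
    simp only [hlog]
  -- identify gradient term
  have hmid : (∑ a, u a * (Real.exp (z a) / (∑ b, Real.exp (z b))
      * (r a - (∑ b, Real.exp (z b) * r b) / (∑ b, Real.exp (z b)))))
      = η * ∑ j, g j ^ 2 := by
    have hpol : ∀ a, Real.exp (z a) / (∑ b, Real.exp (z b)) = policy X θ a := by
      intro a; rw [hz]; rfl
    have hRW : (∑ b, Real.exp (z b) * r b) / (∑ b, Real.exp (z b)) = expRwd X r θ := by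
      rw [hz, ← expRwd_eq]
    simp only [hpol, hRW, hu]
    rw [sum_swap_form X (fun j => η * g j) (fun a => policy X θ a * (r a - expRwd X r θ))]
    rw [Finset.mul_sum]
    apply Finset.sum_congr rfl; intro j _
    rw [hg]
    unfold pgrad
    ring
  rw [hmid] at key
  rw [h0, h1]
  have hfin : 0 ≤ η * ∑ j, g j ^ 2 - Rmax * lamu := by
    rw [hlamu]
    have hsq : ∑ j, (η * g j) ^ 2 = η ^ 2 * ∑ j, g j ^ 2 := by
      rw [Finset.mul_sum]; apply Finset.sum_congr rfl; intro j _; ring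
    rw [hsq]
    have h5 : η * (Rmax * lam) * (η * ∑ j, g j ^ 2) ≤ 1 * (η * ∑ j, g j ^ 2) :=
      mul_le_mul_of_nonneg_right hsmall (mul_nonneg hη0 hG)
    nlinarith
  linarith [key]

end Aux

set_option maxHeartbeats 1000000 in
/-- Failure of global convergence in the three-armed case when the feature condition
`⟨x₂ − x₃, x₁ − x₃⟩ > 0` is violated: if the initialization satisfies
`π_{θ₁}(1)/π_{θ₁}(3) < ζ`, then the ratio stays below `ζ` forever and exact `Lin-SPG`
does not converge to the optimal policy. -/
theorem exact_linspg_failure_three_arms {d : ℕ}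
    (X : Matrix (Fin 3) (Fin d) ℝ) (r : Fin 3 → ℝ)
    (Rmax : ℝ) (hRmax : 0 < Rmax) (hr : ∀ a, |r a| ≤ Rmax)
    (hord : r 2 < r 1 ∧ r 1 < r 0)
    (hw : ∃ w : Fin d → ℝ, ∀ i j : Fin 3,
      ((∑ k, X j k * w k) < ∑ k, X i k * w k ↔ r j < r i))
    (hfeat : ∑ j, (X 1 j - X 2 j) * (X 0 j - X 2 j) < 0)
    (η : ℝ) (hη0 : 0 < η) (hη : η < 4 / (9 * Rmax * lamMax X))
    (θ : ℕ → Fin d → ℝ)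
    (hupd : ∀ t, θ (t + 1) = θ t + η • pgrad X r (θ t))
    (ζ : ℝ)
    (hζ : ζ = ((∑ j, (X 2 j - X 1 j) * (X 0 j - X 2 j)) /
                (∑ j, (X 0 j - X 1 j) * (X 0 j - X 2 j))) *
              ((expRwd X r (θ 0) - r 2) / (r 0 - expRwd X r (θ 0))))
    (hinit : policy X (θ 0) 0 / policy X (θ 0) 2 < ζ) :
    (∀ t : ℕ, policy X (θ t) 0 / policy X (θ t) 2 < ζ) ∧
    ¬ Filter.Tendsto (fun t => policy X (θ t) 0) Filter.atTop (nhds 1) := by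
  obtain ⟨hr21, hr10⟩ := hord
  -- dimension is positive
  rcases Nat.eq_zero_or_pos d with hd0 | hd
  · exfalso; subst hd0; simp at hfeat
  -- feature quantities
  set a0 : ℝ := ∑ j, (X 0 j - X 1 j) * (X 0 j - X 2 j) with ha0def
  set b0 : ℝ := ∑ j, (X 2 j - X 1 j) * (X 0 j - X 2 j) with hb0def
  clear_value a0 b0
  have hb0 : 0 < b0 := by
    have : b0 = -∑ j, (X 1 j - X 2 j) * (X 0 j - X 2 j) := by
      rw [hb0def, ← Finset.sum_neg_distrib]
      apply Finset.sum_congr rfl; intro j _; ring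
    rw [this]; linarith
  have ha0 : 0 < a0 := by
    have h : a0 = b0 + ∑ j, (X 0 j - X 2 j) ^ 2 := by
      rw [ha0def, hb0def, ← Finset.sum_add_distrib]
      apply Finset.sum_congr rfl; intro j _; ring
    have h2 : 0 ≤ ∑ j, (X 0 j - X 2 j) ^ 2 := Finset.sum_nonneg fun _ _ => sq_nonneg _
    rw [h]; linarith
  -- basic policy facts
  have hS : ∀ ψ : Fin d → ℝ, 0 < ∑ b, Real.exp (∑ j, X b j * ψ j) :=
    fun ψ => Finset.sum_pos (fun b _ => Real.exp_pos _) ⟨0, Finset.mem_univ 0⟩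
  have hppos : ∀ (ψ : Fin d → ℝ) (a : Fin 3), 0 < policy X ψ a :=
    fun ψ a => div_pos (Real.exp_pos _) (hS ψ)
  have hpsum : ∀ ψ : Fin d → ℝ, policy X ψ 0 + policy X ψ 1 + policy X ψ 2 = 1 := by
    intro ψ
    unfold policy
    rw [← add_div, ← add_div, div_eq_one_iff_eq (hS ψ).ne']
    rw [Fin.sum_univ_three]
  have hRdef : ∀ ψ : Fin d → ℝ, expRwd X r ψ
      = policy X ψ 0 * r 0 + policy X ψ 1 * r 1 + policy X ψ 2 * r 2 := by
    intro ψ; unfold expRwd; rw [Fin.sum_univ_three]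
  have hRlt : ∀ ψ : Fin d → ℝ, expRwd X r ψ < r 0 := by
    intro ψ
    have h0 := hppos ψ 0; have h1 := hppos ψ 1; have h2 := hppos ψ 2
    have hs := hpsum ψ
    have hsr : (policy X ψ 0 + policy X ψ 1 + policy X ψ 2) * r 0 = r 0 := by
      rw [hs, one_mul]
    rw [hRdef]
    nlinarith [mul_pos h1 (show (0:ℝ) < r 0 - r 1 by linarith),
      mul_pos h2 (show (0:ℝ) < r 0 - r 2 by linarith)]
  have hRgt : ∀ ψ : Fin d → ℝ, r 2 < expRwd X r ψ := by
    intro ψ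
    have h0 := hppos ψ 0; have h1 := hppos ψ 1; have h2 := hppos ψ 2
    have hs := hpsum ψ
    have hsr : (policy X ψ 0 + policy X ψ 1 + policy X ψ 2) * r 2 = r 2 := by
      rw [hs, one_mul]
    rw [hRdef]
    nlinarith [mul_pos h0 (show (0:ℝ) < r 0 - r 2 by linarith),
      mul_pos h1 (show (0:ℝ) < r 1 - r 2 by linarith)]
  have hRabs : ∀ ψ : Fin d → ℝ, |expRwd X r ψ| ≤ Rmax := by
    intro ψ
    have h0 := hppos ψ 0; have h1 := hppos ψ 1; have h2 := hppos ψ 2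
    have hs := hpsum ψ
    have hr0 := abs_le.mp (hr 0); have hr1 := abs_le.mp (hr 1); have hr2 := abs_le.mp (hr 2)
    have hsr : (policy X ψ 0 + policy X ψ 1 + policy X ψ 2) * Rmax = Rmax := by
      rw [hs, one_mul]
    rw [abs_le, hRdef]
    constructor
    · nlinarith [mul_le_mul_of_nonneg_left hr0.1 h0.le,
        mul_le_mul_of_nonneg_left hr1.1 h1.le, mul_le_mul_of_nonneg_left hr2.1 h2.le]
    · nlinarith [mul_le_mul_of_nonneg_left hr0.2 h0.le,
        mul_le_mul_of_nonneg_left hr1.2 h1.le, mul_le_mul_of_nonneg_left hr2.2 h2.le]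
  -- lamMax positivity and step size
  have hlampos : 0 < lamMax X := by
    have hfeat' : ∑ j, (X 1 j - X 2 j) * (X 0 j - X 2 j) < ∑ _j : Fin d, (0:ℝ) := by
      simpa using hfeat
    obtain ⟨j0, _, hj0⟩ := Finset.exists_lt_of_sum_lt hfeat'
    have hj0' : (X 1 j0 - X 2 j0) * (X 0 j0 - X 2 j0) < 0 := by simpa using hj0
    have hX02 : X 0 j0 - X 2 j0 ≠ 0 := by
      intro h
      rw [h, mul_zero] at hj0'
      exact lt_irrefl 0 hj0'
    set v : Fin d → ℝ := fun j => if j = j0 then (1:ℝ) else 0 with hv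
    have hv1 : ∑ j, v j ^ 2 = 1 := by simp [hv]
    have hv2 : ∀ aK : Fin 3, ∑ j, X aK j * v j = X aK j0 := by
      intro aK; simp [hv]
    have hq := quad_le hd X v
    rw [hv1, mul_one] at hq
    have hlhs : 0 < ∑ a, (∑ j, X a j * v j) ^ 2 := by
      have he : ∑ a, (∑ j, X a j * v j) ^ 2 = ∑ a : Fin 3, (X a j0) ^ 2 := by
        apply Finset.sum_congr rfl; intro a _; rw [hv2 a]
      rw [he, Fin.sum_univ_three]
      have hsq : 0 < (X 0 j0 - X 2 j0) ^ 2 :=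
        lt_of_le_of_ne (sq_nonneg _) (Ne.symm (pow_ne_zero 2 hX02))
      nlinarith [sq_nonneg (X 0 j0 + X 2 j0), sq_nonneg (X 1 j0)]
    linarith
  have hsmall : η * (Rmax * lamMax X) ≤ 1 := by
    have hpos : 0 < 9 * Rmax * lamMax X := by positivity
    rw [lt_div_iff₀ hpos] at hη
    nlinarith
  -- ratio formula
  have hratio : ∀ ψ : Fin d → ℝ, policy X ψ 0 / policy X ψ 2
      = Real.exp (∑ j, (X 0 j - X 2 j) * ψ j) := by
    intro ψ
    unfold policy
    rw [div_div_div_comm, div_self (hS ψ).ne', div_one, ← Real.exp_sub]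
    congr 1
    rw [← Finset.sum_sub_distrib]
    apply Finset.sum_congr rfl; intro j _; ring
  -- the key gradient-gap identity
  have hgap : ∀ ψ : Fin d → ℝ, ∑ j, (X 0 j - X 2 j) * pgrad X r ψ j
      = a0 * (policy X ψ 0 * (r 0 - expRwd X r ψ))
        + b0 * (policy X ψ 2 * (r 2 - expRwd X r ψ)) := by
    intro ψ
    have hsw := (sum_swap_form X (fun j => X 0 j - X 2 j)
      (fun a => policy X ψ a * (r a - expRwd X r ψ))).symm
    unfold pgrad
    rw [hsw, Fin.sum_univ_three]
    have ha : (∑ j, X 0 j * (X 0 j - X 2 j)) - (∑ j, X 1 j * (X 0 j - X 2 j)) = a0 := by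
      rw [ha0def, ← Finset.sum_sub_distrib]
      apply Finset.sum_congr rfl; intro j _; ring
    have hb : (∑ j, X 2 j * (X 0 j - X 2 j)) - (∑ j, X 1 j * (X 0 j - X 2 j)) = b0 := by
      rw [hb0def, ← Finset.sum_sub_distrib]
      apply Finset.sum_congr rfl; intro j _; ring
    have hw0 : policy X ψ 0 * (r 0 - expRwd X r ψ) + policy X ψ 1 * (r 1 - expRwd X r ψ)
        + policy X ψ 2 * (r 2 - expRwd X r ψ) = 0 := by
      have e1 : policy X ψ 0 * (r 0 - expRwd X r ψ) + policy X ψ 1 * (r 1 - expRwd X r ψ)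
          + policy X ψ 2 * (r 2 - expRwd X r ψ)
          = (policy X ψ 0 * r 0 + policy X ψ 1 * r 1 + policy X ψ 2 * r 2)
            - (policy X ψ 0 + policy X ψ 1 + policy X ψ 2) * expRwd X r ψ := by ring
      rw [e1, ← hRdef ψ, hpsum ψ]; ring
    linear_combination (∑ j, X 1 j * (X 0 j - X 2 j)) * hw0
      + (policy X ψ 0 * (r 0 - expRwd X r ψ)) * ha
      + (policy X ψ 2 * (r 2 - expRwd X r ψ)) * hb
  -- positivity of ζ
  have hζpos : 0 < ζ := lt_trans (div_pos (hppos (θ 0) 0) (hppos (θ 0) 2)) hinit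
  -- one-step decrease of the ratio
  have hstep : ∀ t : ℕ, policy X (θ t) 0 / policy X (θ t) 2 < ζ →
      expRwd X r (θ 0) ≤ expRwd X r (θ t) →
      policy X (θ (t+1)) 0 / policy X (θ (t+1)) 2
        < policy X (θ t) 0 / policy X (θ t) 2 := by
    intro t hrat hRmono
    have hR2 := hRgt (θ t); have hR0 := hRlt (θ t)
    have hR2' := hRgt (θ 0); have hR0' := hRlt (θ 0)
    have hζt : ζ ≤ (b0 / a0) * ((expRwd X r (θ t) - r 2) / (r 0 - expRwd X r (θ t))) := by
      rw [hζ]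
      apply mul_le_mul_of_nonneg_left _ (le_of_lt (div_pos hb0 ha0))
      rw [div_le_div_iff₀ (by linarith) (by linarith)]
      nlinarith
    have hneg : a0 * (policy X (θ t) 0 * (r 0 - expRwd X r (θ t)))
        + b0 * (policy X (θ t) 2 * (r 2 - expRwd X r (θ t))) < 0 := by
      have hcomb : policy X (θ t) 0 / policy X (θ t) 2
          < (b0 * (expRwd X r (θ t) - r 2)) / (a0 * (r 0 - expRwd X r (θ t))) := by
        calc policy X (θ t) 0 / policy X (θ t) 2 < ζ := hrat
          _ ≤ (b0 / a0) * ((expRwd X r (θ t) - r 2) / (r 0 - expRwd X r (θ t))) := hζt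
          _ = (b0 * (expRwd X r (θ t) - r 2)) / (a0 * (r 0 - expRwd X r (θ t))) := by
              rw [div_mul_div_comm]
      rw [div_lt_div_iff₀ (hppos (θ t) 2) (mul_pos ha0 (sub_pos.mpr hR0))] at hcomb
      nlinarith [hcomb]
    rw [hratio (θ (t+1)), hratio (θ t)]
    apply Real.exp_lt_exp.mpr
    have hgap1 : ∑ j, (X 0 j - X 2 j) * θ (t+1) j
        = (∑ j, (X 0 j - X 2 j) * θ t j)
          + η * ∑ j, (X 0 j - X 2 j) * pgrad X r (θ t) j := by
      rw [hupd t]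
      simp only [Pi.add_apply, Pi.smul_apply, smul_eq_mul]
      rw [Finset.mul_sum, ← Finset.sum_add_distrib]
      apply Finset.sum_congr rfl; intro j _; ring
    rw [hgap1, hgap (θ t)]
    nlinarith
  -- monotone improvement of the reward
  have hascent : ∀ t : ℕ, expRwd X r (θ t) ≤ expRwd X r (θ (t+1)) := by
    intro t
    rw [hupd t]
    exact expRwd_ascent X r Rmax (lamMax X) hRmax.le hr (quad_le hd X) η hη0.le hsmall (θ t)
  -- the invariant
  have hinv : ∀ t : ℕ, policy X (θ t) 0 / policy X (θ t) 2 < ζ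
      ∧ expRwd X r (θ 0) ≤ expRwd X r (θ t) := by
    intro t
    induction t with
    | zero => exact ⟨hinit, le_refl _⟩
    | succ t ih => exact ⟨lt_trans (hstep t ih.1 ih.2) ih.1, le_trans ih.2 (hascent t)⟩
  refine ⟨fun t => (hinv t).1, fun hT => ?_⟩
  have hub : ∀ t : ℕ, policy X (θ t) 0 ≤ ζ / (1 + ζ) := by
    intro t
    have h := (hinv t).1
    have hp0 := hppos (θ t) 0; have hp1 := hppos (θ t) 1; have hp2 := hppos (θ t) 2
    have hs := hpsum (θ t)
    rw [div_lt_iff₀ hp2] at h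
    rw [le_div_iff₀ (by linarith)]
    nlinarith
  have hlim : (1:ℝ) ≤ ζ / (1 + ζ) := le_of_tendsto' hT hub
  have : ζ / (1 + ζ) < 1 := by
    rw [div_lt_one (by linarith)]; linarith
  linarith
end

section
/- Let K = 3, d = 2, with feature rows x_1 = (3, 4), x_2 = (5, 6), x_3 = (1, 2) and rewards r = (3, 2, 1). Then: (a) ⟨x_2 − x_3, x_1 − x_3⟩ = 16 > 0; (b) there is no w ∈ ℝ² with ⟨x_1, w⟩ > ⟨x_2, w⟩ and ⟨x_1, w⟩ > ⟨x_3, w⟩ (so no linear transformation preserves the reward ordering); and (c) for every θ ∈ ℝ², π_θ(1) < 1/2, so for any sequence (θ_t) in ℝ² it is impossible that lim_{t→∞} π_{θ_t}(1) = 1, i.e., the optimal reward cannot be achieved by any (finite or limiting) parameters. -/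
open scoped BigOperators

lemma exp_amgm (a b : ℝ) : 2 * Real.exp ((a + b) / 2) ≤ Real.exp a + Real.exp b := by
  have h := sq_nonneg (Real.exp (a / 2) - Real.exp (b / 2))
  have ha : Real.exp (a / 2) * Real.exp (a / 2) = Real.exp a := by
    rw [← Real.exp_add]; ring_nf
  have hb : Real.exp (b / 2) * Real.exp (b / 2) = Real.exp b := by
    rw [← Real.exp_add]; ring_nf
  have hab : Real.exp (a / 2) * Real.exp (b / 2) = Real.exp ((a + b) / 2) := by
    rw [← Real.exp_add]; ring_nf
  nlinarith

/-- A concrete example (`K = 3`, `d = 2`, rows `x₁ = (3,4)`, `x₂ = (5,6)`, `x₃ = (1,2)`,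
rewards `r = (3,2,1)`) where (a) the feature condition `⟨x₂ − x₃, x₁ − x₃⟩ = 16 > 0` holds,
(b) no linear transformation preserves the reward ordering, and (c) the optimal reward is not
achievable: `π_θ(1) < 1/2` for all `θ`, so no parameter sequence makes `π_{θ_t}(1) → 1`. -/
theorem example_no_ordering_preservation :
    let X : Matrix (Fin 3) (Fin 2) ℝ := !![3, 4; 5, 6; 1, 2]
    let r : Fin 3 → ℝ := ![3, 2, 1]
    ((∑ j, (X 1 j - X 2 j) * (X 0 j - X 2 j)) = 16) ∧
    (¬ ∃ w : Fin 2 → ℝ,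
      (∑ k, X 1 k * w k) < (∑ k, X 0 k * w k) ∧ (∑ k, X 2 k * w k) < (∑ k, X 0 k * w k)) ∧
    (∀ θ : Fin 2 → ℝ, policy X θ 0 < 1 / 2) ∧
    (∀ θseq : ℕ → Fin 2 → ℝ,
      ¬ Filter.Tendsto (fun t => policy X (θseq t) 0) Filter.atTop (nhds 1)) := by
  intro X r
  have hpol : ∀ θ : Fin 2 → ℝ, policy X θ 0 < 1 / 2 := by
    intro θ
    have hs : ∀ a : Fin 3, (∑ j, X a j * θ j) = X a 0 * θ 0 + X a 1 * θ 1 := by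
      intro a; simp [Fin.sum_univ_two]
    unfold policy
    rw [Fin.sum_univ_three, hs 0, hs 1, hs 2]
    set s1 := X 0 0 * θ 0 + X 0 1 * θ 1 with hs1
    set s2 := X 1 0 * θ 0 + X 1 1 * θ 1 with hs2
    set s3 := X 2 0 * θ 0 + X 2 1 * θ 1 with hs3
    have hmid : s1 = (s2 + s3) / 2 := by
      simp only [hs1, hs2, hs3, X, Matrix.cons_val_zero, Matrix.cons_val_one, Matrix.head_cons,
        Matrix.head_fin_const, Matrix.cons_val_fin_one, Matrix.cons_val]
      norm_num
      simp only [Matrix.cons_val_two, Matrix.vecHead, Matrix.vecTail, Function.comp_apply, Matrix.cons_val_succ]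
      ring
    have hkey : 2 * Real.exp s1 ≤ Real.exp s2 + Real.exp s3 := by
      rw [hmid]; exact exp_amgm s2 s3
    have h1 : 0 < Real.exp s1 := Real.exp_pos _
    have hden : 0 < Real.exp s1 + Real.exp s2 + Real.exp s3 := by positivity
    rw [div_lt_iff₀ hden]
    nlinarith
  refine ⟨?_, ?_, hpol, ?_⟩
  · simp [Fin.sum_univ_two, X]
    norm_num
  · rintro ⟨w, h1, h2⟩
    simp only [Fin.sum_univ_two, X, Matrix.cons_val_zero, Matrix.cons_val_one, Matrix.head_cons,
      Matrix.head_fin_const, Matrix.cons_val_fin_one, Matrix.cons_val] at h1 h2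
    norm_num at h1 h2
    simp only [Matrix.cons_val_two, Matrix.vecHead, Matrix.vecTail, Function.comp_apply, Matrix.cons_val_succ] at h2
    linarith
  · intro θseq h
    have := (h.eventually (eventually_gt_nhds (by norm_num : (1:ℝ)/2 < 1))).exists
    obtain ⟨t, ht⟩ := this
    exact absurd ht (not_lt.2 (le_of_lt (hpol (θseq t))))
end

section
/- Let A > 0 and let (y_n)_{n≥0} be the real sequence defined by the recurrence y_{n+1} = y_n + e^{−A y_n}. If y_0 ≥ ln(A)/A, then for all n > 0, y_n ≤ (1/A) ln(A n + e^{A y_0}) + π²/(6A). -/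
/-- For the recurrence `y_{n+1} = y_n + e^{−A y_n}` with `A > 0` and `y_0 ≥ ln(A)/A`,
for all `n > 0`, `y_n ≤ (1/A) ln(A n + e^{A y_0}) + π²/(6A)`. -/
theorem recurrence_log_upper_bound (A : ℝ) (hA : 0 < A) (y : ℕ → ℝ)
    (hrec : ∀ n, y (n + 1) = y n + Real.exp (-(A * y n)))
    (h0 : Real.log A / A ≤ y 0) :
    ∀ n : ℕ, 0 < n →
      y n ≤ (1 / A) * Real.log (A * n + Real.exp (A * y 0)) + Real.pi ^ 2 / (6 * A) := by
  intro n _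
  set z0 := Real.exp (A * y 0) with hz0
  have hz0pos : 0 < z0 := Real.exp_pos _
  have hAz0 : A ≤ z0 := by
    have hlog : Real.log A ≤ A * y 0 := by
      have := (div_le_iff₀ hA).mp h0
      linarith
    calc A = Real.exp (Real.log A) := (Real.exp_log hA).symm
      _ ≤ z0 := Real.exp_le_exp.mpr hlog
  -- lower bound : exp(A y m) ≥ A m + z0
  have lower : ∀ m : ℕ, A * m + z0 ≤ Real.exp (A * y m) := by
    intro m
    induction m with
    | zero => simp [hz0]
    | succ k ih =>
      have h1 : Real.exp (A * y (k+1))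
          = Real.exp (A * y k) * Real.exp (A * Real.exp (-(A * y k))) := by
        rw [hrec k, mul_add, Real.exp_add]
      have h2 : A * Real.exp (-(A * y k)) + 1 ≤ Real.exp (A * Real.exp (-(A * y k))) :=
        Real.add_one_le_exp _
      have h3 : Real.exp (A * y k) * (A * Real.exp (-(A * y k)) + 1)
          = Real.exp (A * y k) + A := by
        rw [Real.exp_neg]
        field_simp
        ring
      have h4 : Real.exp (A * y k) + A ≤ Real.exp (A * y (k+1)) := by
        rw [h1, ← h3]
        exact mul_le_mul_of_nonneg_left h2 (Real.exp_pos _).le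
      push_cast
      push_cast at ih
      nlinarith
  -- key one-step upper bound
  have key : ∀ k : ℕ, A * y (k+1) ≤ A * y k +
      (Real.log (A * (k+1) + z0) - Real.log (A * k + z0)) + 1 / ((k:ℝ)+1)^2 := by
    intro k
    set a : ℝ := A * k + z0 with ha_def
    set b : ℝ := A * (k+1) + z0 with hb_def
    have hk0 : (0:ℝ) ≤ (k:ℝ) := Nat.cast_nonneg k
    have ha : 0 < a := by positivity
    have hb : 0 < b := by positivity
    have hba : b = a + A := by rw [ha_def, hb_def]; ring
    -- exp(-(A y k)) ≤ 1/a
    have hexp : Real.exp (-(A * y k)) ≤ 1 / a := by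
      rw [Real.exp_neg]
      rw [inv_eq_one_div]
      apply one_div_le_one_div_of_le ha (lower k)
    -- log b - log a ≥ A / b
    have hlogdiff : A / b ≤ Real.log b - Real.log a := by
      have h1 : Real.log (a / b) ≤ a / b - 1 := Real.log_le_sub_one_of_pos (by positivity)
      rw [Real.log_div ha.ne' hb.ne'] at h1
      have h2 : a / b - 1 = -(A / b) := by
        field_simp
        linarith
      linarith [h1, h2 ▸ h1]
    -- A/a - A/b ≤ 1/(k+1)^2
    have hak : A * ((k:ℝ)+1) ≤ a := by
      rw [ha_def]; nlinarith
    have hbk : A * ((k:ℝ)+1) ≤ b := by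
      rw [hb_def]; nlinarith
    have hgap : A / a - A / b ≤ 1 / ((k:ℝ)+1)^2 := by
      have h1 : A / a - A / b = A * A / (a * b) := by
        field_simp
        nlinarith [hba]
      rw [h1]
      have hk1 : (0:ℝ) < (k:ℝ)+1 := by positivity
      have hab : A * ((k:ℝ)+1) * (A * ((k:ℝ)+1)) ≤ a * b :=
        mul_le_mul hak hbk (by positivity) ha.le
      calc A * A / (a * b) ≤ A * A / (A * ((k:ℝ)+1) * (A * ((k:ℝ)+1))) := by
            apply div_le_div_of_nonneg_left (by positivity) (by positivity) hab
        _ = 1 / ((k:ℝ)+1)^2 := by field_simp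
    have hstep : A * Real.exp (-(A * y k)) ≤ A / a :=
      calc A * Real.exp (-(A * y k)) ≤ A * (1 / a) :=
            mul_le_mul_of_nonneg_left hexp hA.le
        _ = A / a := by ring
    have := hrec k
    nlinarith [hlogdiff, hgap, hstep]
  -- main induction
  have main : ∀ m : ℕ, A * y m ≤ A * y 0 + (Real.log (A * m + z0) - Real.log z0)
      + ∑ k ∈ Finset.range m, 1 / ((k:ℝ)+1)^2 := by
    intro m
    induction m with
    | zero => simp
    | succ k ih =>
      have := key k
      rw [Finset.sum_range_succ]
      push_cast at this ih ⊢
      linarith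
  -- bound the sum by π²/6
  have hsum : ∀ m : ℕ, ∑ k ∈ Finset.range m, 1 / ((k:ℝ)+1)^2 ≤ Real.pi ^ 2 / 6 := by
    intro m
    have h1 : ∑ k ∈ Finset.range m, 1 / ((k:ℝ)+1)^2
        ≤ ∑ k ∈ Finset.range (m+1), 1 / ((k:ℝ))^2 := by
      rw [Finset.sum_range_succ']
      simp
    refine h1.trans ?_
    exact sum_le_hasSum _ (fun i _ => by positivity) hasSum_zeta_two
  have hlogz0 : Real.log z0 = A * y 0 := Real.log_exp _
  have hfinal : A * y n ≤ Real.log (A * n + z0) + Real.pi ^ 2 / 6 := by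
    have := main n
    have := hsum n
    linarith [main n, hsum n, hlogz0]
  rw [div_le_iff₀ hA] at *
  have : y n ≤ (Real.log (A * n + z0) + Real.pi ^ 2 / 6) / A := by
    rw [le_div_iff₀ hA]; linarith [hfinal]
  calc y n ≤ (Real.log (A * n + z0) + Real.pi ^ 2 / 6) / A := this
    _ = (1 / A) * Real.log (A * n + z0) + Real.pi ^ 2 / (6 * A) := by
      field_simp
end
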